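/- arXiv:quant-ph/0308029 — 7 statements merged into one kernel-verified Lean document; each statement's English description precedes it below -/
import Mathlib

section
/- Let d ≥ 2 be an integer, F = ℤ/dℤ, let p be a probability distribution on F and let R ∈ [0,1] satisfy R < 1 − 2H(p). Then E*(R,p) > 0, i.e., the infimum over all probability distributions Q on F of D(Q‖p) + (1/2)·max{1 − 2H(Q) − R, 0} is strictly positive. -/
/- STATEMENT 2: positivity of the exponent: if R < 1 − 2H(p) then E*(R,p) > 0. -/

open scoped BigOperators

noncomputable section

/-- Probability distribution on a finite set. -/
def IsProbDist {Y : Type*} [Fintype Y] (p : Y → ℝ) : Prop :=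
  (∀ a, 0 ≤ p a) ∧ ∑ a, p a = 1

/-- Base-`d` entropy `H(Q) = −Σ_a Q(a) log_d Q(a)`. -/
def entd (d : ℕ) {Y : Type*} [Fintype Y] (Q : Y → ℝ) : ℝ := -∑ a, Q a * Real.logb d (Q a)

/-- Base-`d` Kullback–Leibler divergence `D(Q‖p) = Σ_a Q(a) log_d (Q(a)/p(a))`. -/
def kld (d : ℕ) {Y : Type*} [Fintype Y] (Q p : Y → ℝ) : ℝ := ∑ a, Q a * Real.logb d (Q a / p a)

/-- `E*(R,p) = inf_Q [ D(Q‖p) + ½·|1 − 2H(Q) − R|⁺ ]` over probability distributions `Q`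
on `ℤ/dℤ` (those not absolutely continuous w.r.t. `p` contribute `+∞`, so are omitted). -/
def Estar (d : ℕ) [NeZero d] (R : ℝ) (p : ZMod d → ℝ) : ℝ :=
  sInf {v : ℝ | ∃ Q : ZMod d → ℝ, IsProbDist Q ∧ (∀ a, p a = 0 → Q a = 0) ∧
    v = kld d Q p + 2⁻¹ * max (1 - 2 * entd d Q - R) 0}

lemma aux_gibbs {d : ℕ} [NeZero d] (hd : 2 ≤ d) (p Q : ZMod d → ℝ) (hp : IsProbDist p)
    (hQ : IsProbDist Q) (habs : ∀ a, p a = 0 → Q a = 0) :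
    0 ≤ kld d Q p ∧ (kld d Q p = 0 → Q = p) := by
  have hlogd : 0 < Real.log d := Real.log_pos (by exact_mod_cast hd.trans_lt' one_lt_two)
  set t : Finset (ZMod d) := Finset.univ.filter (fun a => p a ≠ 0) with ht
  have hmemt : ∀ a, a ∈ t ↔ p a ≠ 0 := by intro a; simp [ht]
  have hw0 : ∀ a ∈ t, 0 < p a := fun a ha => (hp.1 a).lt_of_ne (Ne.symm ((hmemt a).mp ha))
  have hw1 : ∑ a ∈ t, p a = 1 := by
    rw [ht, Finset.sum_filter_ne_zero]; exact hp.2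
  have hmem : ∀ a ∈ t, Q a / p a ∈ Set.Ici (0:ℝ) :=
    fun a ha => div_nonneg (hQ.1 a) (hp.1 a)
  have hQt : ∑ a ∈ t, Q a = 1 := by
    rw [Finset.sum_subset (Finset.subset_univ t)]
    · exact hQ.2
    · intro a _ ha
      exact habs a (not_not.mp (fun h => ha ((hmemt a).mpr h)))
  have hcm : ∑ a ∈ t, p a • (Q a / p a) = 1 := by
    rw [← hQt]
    refine Finset.sum_congr rfl fun a ha => ?_
    rw [smul_eq_mul, mul_div_cancel₀ _ ((hmemt a).mp ha)]
  have hsum : ∑ a ∈ t, p a • ((Q a / p a) * Real.log (Q a / p a))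
      = ∑ a, Q a * Real.log (Q a / p a) := by
    rw [Finset.sum_subset (Finset.subset_univ t) (fun a _ ha => by
      have hpa : p a = 0 := not_not.mp (fun h => ha ((hmemt a).mpr h))
      simp [hpa])]
    refine Finset.sum_congr rfl fun a _ => ?_
    by_cases hpa : p a = 0
    · simp [hpa, habs a hpa]
    · rw [smul_eq_mul, ← mul_assoc, mul_div_cancel₀ _ hpa]
  have hkld : kld d Q p = (∑ a, Q a * Real.log (Q a / p a)) / Real.log d := by
    rw [kld, Finset.sum_div]
    refine Finset.sum_congr rfl fun a _ => ?_
    rw [Real.logb, mul_div_assoc]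
  have hjensen : (fun x : ℝ => x * Real.log x) (∑ a ∈ t, p a • (Q a / p a))
      ≤ ∑ a ∈ t, p a • ((fun x : ℝ => x * Real.log x) (Q a / p a)) :=
    Real.convexOn_mul_log.map_sum_le (fun a ha => (hw0 a ha).le) hw1 hmem
  rw [hcm] at hjensen
  simp only [Real.log_one, mul_zero] at hjensen
  have h0 : 0 ≤ ∑ a, Q a * Real.log (Q a / p a) := hsum ▸ hjensen
  constructor
  · rw [hkld]; positivity
  · intro hk
    have hL : ∑ a, Q a * Real.log (Q a / p a) = 0 := by
      rw [hkld] at hk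
      exact (div_eq_zero_iff.mp hk).resolve_right hlogd.ne'
    have heq : (fun x : ℝ => x * Real.log x) (∑ a ∈ t, p a • (Q a / p a))
        = ∑ a ∈ t, p a • ((fun x : ℝ => x * Real.log x) (Q a / p a)) := by
      rw [hcm, hsum, hL]; simp
    have := (Real.strictConvexOn_mul_log.map_sum_eq_iff hw0 hw1 hmem).mp heq
    funext a
    by_cases ha : a ∈ t
    · have h1 := this a ha
      rw [hcm] at h1
      exact (div_eq_one_iff_eq ((hmemt a).mp ha)).mp h1
    · have hpa : p a = 0 := not_not.mp (fun h => ha ((hmemt a).mpr h))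
      rw [habs a hpa, hpa]


theorem stmt_2 (d : ℕ) [NeZero d] (hd : 2 ≤ d) (p : ZMod d → ℝ) (hp : IsProbDist p)
    (R : ℝ) (hR0 : 0 ≤ R) (hR1 : R ≤ 1) (hR : R < 1 - 2 * entd d p) :
    0 < Estar d R p := by
  have hlogd : 0 < Real.log d := Real.log_pos (by exact_mod_cast hd.trans_lt' one_lt_two)
  set S : Set (ZMod d → ℝ) := {Q | IsProbDist Q ∧ ∀ a, p a = 0 → Q a = 0} with hS
  set f : (ZMod d → ℝ) → ℝ :=
    fun Q => kld d Q p + 2⁻¹ * max (1 - 2 * entd d Q - R) 0 with hf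
  set g : (ZMod d → ℝ) → ℝ := fun Q =>
    (∑ a, (if p a = 0 then 0 else Q a * Real.log (Q a) - Q a * Real.log (p a))) / Real.log d
      + 2⁻¹ * max (1 - 2 * (-((∑ a, Q a * Real.log (Q a)) / Real.log d)) - R) 0 with hg
  -- entropy rewrite, valid everywhere
  have hent : ∀ Q : ZMod d → ℝ, entd d Q = -((∑ a, Q a * Real.log (Q a)) / Real.log d) := by
    intro Q
    rw [entd, Finset.sum_div]
    congr 1
    exact Finset.sum_congr rfl fun a _ => by rw [Real.logb, mul_div_assoc]
  -- f = g on S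
  have hfg : ∀ Q ∈ S, f Q = g Q := by
    intro Q hQ
    obtain ⟨hQP, habs⟩ := hQ
    have hk : kld d Q p
        = (∑ a, (if p a = 0 then 0 else Q a * Real.log (Q a) - Q a * Real.log (p a)))
          / Real.log d := by
      rw [kld, Finset.sum_div]
      refine Finset.sum_congr rfl fun a _ => ?_
      by_cases hpa : p a = 0
      · simp [hpa, habs a hpa]
      · by_cases hqa : Q a = 0
        · simp [hpa, hqa]
        · rw [if_neg hpa, Real.logb, Real.log_div hqa hpa]
          field_simp
    show kld d Q p + 2⁻¹ * max (1 - 2 * entd d Q - R) 0 = _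
    rw [hk, hent Q]
  -- g is continuous
  have hgc : Continuous g := by
    have h1 : Continuous fun Q : ZMod d → ℝ => ∑ a, Q a * Real.log (Q a) := by
      refine continuous_finset_sum _ fun a _ => ?_
      exact Real.continuous_mul_log.comp (continuous_apply a)
    have h2 : Continuous fun Q : ZMod d → ℝ =>
        ∑ a, (if p a = 0 then 0 else Q a * Real.log (Q a) - Q a * Real.log (p a)) := by
      refine continuous_finset_sum _ fun a _ => ?_
      by_cases hpa : p a = 0
      · simp only [if_pos hpa]; exact continuous_const
      · simp only [if_neg hpa]
        exact (Real.continuous_mul_log.comp (continuous_apply a)).sub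
          ((continuous_apply a).mul continuous_const)
    exact (h2.div_const _).add (continuous_const.mul
      ((((continuous_const.sub (continuous_const.mul (h1.div_const _).neg)).sub
        continuous_const).max continuous_const)))
  -- S is compact
  have hScomp : IsCompact S := by
    have hclosed : IsClosed S := by
      have h1 : IsClosed {Q : ZMod d → ℝ | ∀ a, 0 ≤ Q a} := by
        rw [Set.setOf_forall]
        exact isClosed_iInter fun a => isClosed_le continuous_const (continuous_apply a)
      have h2 : IsClosed {Q : ZMod d → ℝ | ∑ a, Q a = 1} :=
        isClosed_eq (continuous_finset_sum _ fun a _ => continuous_apply a) continuous_const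
      have h3 : IsClosed {Q : ZMod d → ℝ | ∀ a, p a = 0 → Q a = 0} := by
        rw [Set.setOf_forall]
        refine isClosed_iInter fun a => ?_
        by_cases hpa : p a = 0
        · simp only [hpa, forall_const]
          exact isClosed_eq (continuous_apply a) continuous_const
        · have : {Q : ZMod d → ℝ | p a = 0 → Q a = 0} = Set.univ := by
            ext Q; simp [hpa]
          rw [this]; exact isClosed_univ
      have : S = ({Q : ZMod d → ℝ | ∀ a, 0 ≤ Q a} ∩ {Q | ∑ a, Q a = 1})
          ∩ {Q | ∀ a, p a = 0 → Q a = 0} := by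
        ext Q; simp [hS, IsProbDist, and_assoc]
      rw [this]
      exact ((h1.inter h2).inter h3)
    refine (isCompact_Icc (a := (0 : ZMod d → ℝ)) (b := 1)).of_isClosed_subset hclosed ?_
    intro Q hQ
    obtain ⟨⟨hQ0, hQ1⟩, _⟩ := hQ
    refine ⟨fun a => hQ0 a, fun a => ?_⟩
    calc Q a ≤ ∑ b, Q b := Finset.single_le_sum (fun b _ => hQ0 b) (Finset.mem_univ a)
    _ = 1 := hQ1
  have hSne : S.Nonempty := ⟨p, hp, fun a h => h⟩
  -- minimum
  obtain ⟨Q₀, hQ₀S, hmin⟩ := hScomp.exists_isMinOn hSne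
    (hgc.continuousOn.congr hfg)
  -- the Estar set is f '' S
  have hset : {v : ℝ | ∃ Q : ZMod d → ℝ, IsProbDist Q ∧ (∀ a, p a = 0 → Q a = 0) ∧
      v = kld d Q p + 2⁻¹ * max (1 - 2 * entd d Q - R) 0} = f '' S := by
    ext v
    constructor
    · rintro ⟨Q, h1, h2, rfl⟩; exact ⟨Q, ⟨h1, h2⟩, rfl⟩
    · rintro ⟨Q, ⟨h1, h2⟩, rfl⟩; exact ⟨Q, h1, h2, rfl⟩
  have hleast : IsLeast (f '' S) (f Q₀) := by
    constructor
    · exact ⟨Q₀, hQ₀S, rfl⟩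
    · rintro v ⟨Q, hQ, rfl⟩
      exact hmin hQ
  have hinf : Estar d R p = f Q₀ := by
    rw [Estar, hset, hleast.csInf_eq]
  rw [hinf]
  -- positivity of f Q₀
  obtain ⟨hQ₀P, hQ₀abs⟩ := hQ₀S
  obtain ⟨hk0, hkeq⟩ := aux_gibbs hd p Q₀ hp hQ₀P hQ₀abs
  have hfQ : f Q₀ = kld d Q₀ p + 2⁻¹ * max (1 - 2 * entd d Q₀ - R) 0 := rfl
  rcases eq_or_lt_of_le hk0 with hk | hk
  · -- kld = 0, so Q₀ = p
    have hQp : Q₀ = p := hkeq hk.symm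
    have hpos : 0 < 1 - 2 * entd d Q₀ - R := by rw [hQp]; linarith
    rw [hfQ, ← hk, max_eq_left hpos.le]
    have : 0 < 2⁻¹ * (1 - 2 * entd d Q₀ - R) := mul_pos (by norm_num) hpos
    linarith
  · rw [hfQ]
    have : 0 ≤ 2⁻¹ * max (1 - 2 * entd d Q₀ - R) 0 := by positivity
    linarith
end
end

section
/- Let d ≥ 3 be a prime, F = ℤ/dℤ, and let n ≥ 1 and 0 ≤ κ ≤ n be integers. Let A = {C ⊆ F^n : C is a linear subspace, C ⊆ C^⊥, dim_F C = κ}, and for x ∈ F^n let A_x = {C ∈ A : x ∈ C^⊥}. Then for any two nonzero vectors x, y ∈ F^n with x·x = y·y one has |A_x| = |A_y|. -/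
/- STATEMENT 4 (Lemma on balanced ensembles, d ≥ 3): for nonzero x, y with x·x = y·y,
   the numbers of self-orthogonal κ-dimensional codes C with x ∈ C^⊥ and with y ∈ C^⊥
   coincide. -/

open scoped BigOperators

noncomputable section

/-- Dot product `x·y = Σᵢ xᵢ yᵢ` in `ℤ/dℤ`. -/
def dotp {d n : ℕ} (x y : Fin n → ZMod d) : ZMod d := ∑ i, x i * y i

/-- `C^⊥ = {y : ∀ x ∈ C, x·y = 0}`. -/
def dualSet {d n : ℕ} (C : Set (Fin n → ZMod d)) : Set (Fin n → ZMod d) :=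
  {y | ∀ x ∈ C, dotp x y = 0}

/-- `A = {C : C linear, C ⊆ C^⊥, dim C = κ}`, the self-orthogonal κ-dimensional codes. -/
def Aset (d n κ : ℕ) : Set (Submodule (ZMod d) (Fin n → ZMod d)) :=
  {C | (C : Set (Fin n → ZMod d)) ⊆ dualSet (C : Set (Fin n → ZMod d)) ∧
    Module.finrank (ZMod d) C = κ}

/-- `A_x = {C ∈ A : x ∈ C^⊥}`. -/
def AsetX (d n κ : ℕ) (x : Fin n → ZMod d) : Set (Submodule (ZMod d) (Fin n → ZMod d)) :=
  {C ∈ Aset d n κ | x ∈ dualSet (C : Set (Fin n → ZMod d))}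

/-! The dot product is a nondegenerate symmetric bilinear form, and `2 ≠ 0` in `ℤ/dℤ`. So, as in
Witt's theorem, some isometry `e` maps `x` to `y`: the reflection in `x - y` or in `x + y` when one
of them is anisotropic, and otherwise a product of two reflections through an isotropic vector `w`
with `x·w ≠ 0 ≠ y·w`. An isometry maps `C^⊥` to `(e C)^⊥` and preserves dimension, so `C ↦ e C`
is a bijection from `A_x` onto `A_y`. -/

namespace LinearMap

lemma SeparatingLeft.exists_apply_ne_zero_and_apply_ne_zero {R V : Type*} [CommRing R]
    [AddCommGroup V] [Module R V] {B : LinearMap.BilinForm R V} (hB : B.SeparatingLeft)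
    {x y : V} (hx : x ≠ 0) (hy : y ≠ 0) : ∃ z, B x z ≠ 0 ∧ B y z ≠ 0 := by
  obtain ⟨z₁, hxz₁⟩ : ∃ z, B x z ≠ 0 := by simpa using mt (hB x) hx
  obtain ⟨z₂, hyz₂⟩ : ∃ z, B y z ≠ 0 := by simpa using mt (hB y) hy
  by_cases hyz₁ : B y z₁ = 0
  · by_cases hxz₂ : B x z₂ = 0
    · exact ⟨z₁ + z₂, by simpa [hxz₂] using hxz₁, by simpa [hyz₁] using hyz₂⟩
    · exact ⟨z₂, hxz₂, hyz₂⟩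
  · exact ⟨z₁, hxz₁, hyz₁⟩

lemma IsOrthogonal.trans {R V : Type*} [CommRing R] [AddCommGroup V] [Module R V]
    {B : LinearMap.BilinForm R V} {e f : V ≃ₗ[R] V} (he : B.IsOrthogonal e)
    (hf : B.IsOrthogonal f) : B.IsOrthogonal (e.trans f) :=
  fun u w ↦ (hf (e u) (e w)).trans (he u w)

end LinearMap

namespace LinearMap.BilinForm

variable {K V : Type*} [Field K] [AddCommGroup V] [Module K V] {B : LinearMap.BilinForm K V}

lemma IsSymm.apply_sub_sub (hB : B.IsSymm) (x y : V) :
    B (x - y) (x - y) = B x x - 2 * B x y + B y y := by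
  simp only [map_sub, LinearMap.sub_apply, hB.eq y x]
  ring

lemma IsSymm.apply_add_add (hB : B.IsSymm) (x y : V) :
    B (x + y) (x + y) = B x x + 2 * B x y + B y y := by
  simp only [map_add, LinearMap.add_apply, hB.eq y x]
  ring

lemma isOrthogonal_neg : B.IsOrthogonal (LinearEquiv.neg K : V ≃ₗ[K] V) :=
  fun u w ↦ by simp

variable [NeZero (2 : K)]

lemma isReflective_of_apply_self_ne_zero {v : V} (hv : B v v ≠ 0) : IsReflective B v :=
  IsReflective.of_dvd_two B (isUnit_iff_ne_zero.mpr hv).dvd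

/-- The reflection in the anisotropic vector `x - y` swaps `x` and `y`. -/
lemma exists_isOrthogonal_apply_eq_of_apply_sub_sub_ne_zero (hB : B.IsSymm) {x y : V}
    (hxy : B x x = B y y) (hsub : B (x - y) (x - y) ≠ 0) :
    ∃ e : V ≃ₗ[K] V, B.IsOrthogonal e ∧ e x = y := by
  have hv := isReflective_of_apply_self_ne_zero hsub
  refine ⟨Module.reflection (hv.coroot_apply_self B),
    hv.isOrthogonal_reflection B (isSymm_iff.mp hB), ?_⟩
  have hcoroot : hv.coroot B x = 1 := by
    refine mul_left_cancel₀ hsub ?_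
    rw [hv.apply_self_mul_coroot_apply, mul_one, hB.apply_sub_sub]
    simp only [map_sub, LinearMap.sub_apply, hB.eq y x]
    linear_combination hxy
  rw [Module.reflection_apply, hcoroot, one_smul, sub_sub_cancel]

/-- The witness is `z + t • x` with `t = -B z z / (2 B x z)`, for any `z` pairing nontrivially
with both `x` and `y`. -/
lemma exists_isotropic_apply_ne_zero (hB : B.IsSymm) (hB' : B.SeparatingLeft) {x y : V}
    (hx : x ≠ 0) (hy : y ≠ 0) (hxx : B x x = 0) (hxy : B x y = 0) :
    ∃ w, B w w = 0 ∧ B x w ≠ 0 ∧ B y w ≠ 0 := by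
  obtain ⟨z, hxz, hyz⟩ := hB'.exists_apply_ne_zero_and_apply_ne_zero hx hy
  have h2xz : 2 * B x z ≠ 0 := mul_ne_zero two_ne_zero hxz
  set t := -B z z / (2 * B x z)
  have hyx : B y x = 0 := by rw [hB.eq y x, hxy]
  refine ⟨z + t • x, ?_, by simpa [hxx] using hxz, by simpa [hyx] using hyz⟩
  have hzx : B z x = B x z := hB.eq z x
  simp only [map_add, map_smul, LinearMap.add_apply, LinearMap.smul_apply, smul_eq_mul, hxx, hzx]
  linear_combination div_mul_cancel₀ (-B z z) h2xz

theorem exists_isOrthogonal_apply_eq (hB : B.IsSymm) (hB' : B.SeparatingLeft) {x y : V}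
    (hx : x ≠ 0) (hy : y ≠ 0) (hxy : B x x = B y y) :
    ∃ e : V ≃ₗ[K] V, B.IsOrthogonal e ∧ e x = y := by
  by_cases hsub : B (x - y) (x - y) ≠ 0
  · exact exists_isOrthogonal_apply_eq_of_apply_sub_sub_ne_zero hB hxy hsub
  by_cases hadd : B (x + y) (x + y) ≠ 0
  · obtain ⟨e, he, hex⟩ := exists_isOrthogonal_apply_eq_of_apply_sub_sub_ne_zero (y := -y) hB
      (by simpa using hxy) (by simpa using hadd)
    exact ⟨e.trans (LinearEquiv.neg K), he.trans isOrthogonal_neg, by simp [hex]⟩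
  push Not at hsub hadd
  rw [hB.apply_sub_sub] at hsub
  rw [hB.apply_add_add] at hadd
  have hxx : B x x = 0 := by
    have : (2 : K) * (2 * B x x) = 0 := by linear_combination hsub + hadd + 2 * hxy
    simpa [two_ne_zero] using this
  have hxy₀ : B x y = 0 := by
    have : (2 : K) * (2 * B x y) = 0 := by linear_combination hadd - hsub
    simpa [two_ne_zero] using this
  obtain ⟨w, hww, hxw, hyw⟩ := exists_isotropic_apply_ne_zero hB hB' hx hy hxx hxy₀
  have hwy : B w y ≠ 0 := by rwa [hB.eq w y]
  obtain ⟨e₁, he₁, hex⟩ := exists_isOrthogonal_apply_eq_of_apply_sub_sub_ne_zero hB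
    (hxx.trans hww.symm) (by rw [hB.apply_sub_sub, hxx, hww]; simpa [two_ne_zero] using hxw)
  obtain ⟨e₂, he₂, hey⟩ := exists_isOrthogonal_apply_eq_of_apply_sub_sub_ne_zero hB
    (hww.trans (hxx.symm.trans hxy))
    (by rw [hB.apply_sub_sub, hww, ← hxy, hxx]; simpa [two_ne_zero] using hwy)
  exact ⟨e₁.trans e₂, he₁.trans he₂, by simp [hex, hey]⟩

end LinearMap.BilinForm

variable {d n : ℕ}

abbrev dotpForm (d n : ℕ) : LinearMap.BilinForm (ZMod d) (Fin n → ZMod d) :=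
  dotProductBilin (ZMod d) (ZMod d)

lemma dotpForm_apply (x y : Fin n → ZMod d) : dotpForm d n x y = dotp x y := rfl

lemma dotpForm_isSymm : (dotpForm d n).IsSymm :=
  ⟨fun x y ↦ dotProduct_comm x y⟩

lemma dotpForm_separatingLeft : (dotpForm d n).SeparatingLeft := fun x hx ↦
  funext fun i ↦ by simpa using hx (Pi.single i 1)

lemma dualSet_image {e : (Fin n → ZMod d) ≃ₗ[ZMod d] (Fin n → ZMod d)}
    (he : (dotpForm d n).IsOrthogonal e) (S : Set (Fin n → ZMod d)) :
    dualSet (e '' S) = e '' dualSet S := by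
  ext y
  obtain ⟨y, rfl⟩ := e.surjective y
  rw [e.injective.mem_set_image]
  show (∀ x ∈ e '' S, dotp x (e y) = 0) ↔ ∀ x ∈ S, dotp x y = 0
  simp only [Set.forall_mem_image, ← dotpForm_apply]
  exact forall₂_congr fun x _ ↦ by rw [he]

lemma map_mem_asetX_iff {κ : ℕ} {e : (Fin n → ZMod d) ≃ₗ[ZMod d] (Fin n → ZMod d)}
    (he : (dotpForm d n).IsOrthogonal e) (x : Fin n → ZMod d)
    (C : Submodule (ZMod d) (Fin n → ZMod d)) :
    C.map (e : (Fin n → ZMod d) →ₗ[ZMod d] (Fin n → ZMod d)) ∈ AsetX d n κ (e x) ↔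
      C ∈ AsetX d n κ x := by
  simp only [AsetX, Aset, Set.mem_ofPred_eq, Submodule.map_coe, LinearEquiv.coe_coe,
    dualSet_image he, Set.image_subset_image_iff e.injective, e.injective.mem_set_image,
    LinearEquiv.finrank_map_eq]

theorem stmt_4_general (d : ℕ) (hd : d.Prime) (hd3 : 3 ≤ d) (n : ℕ)
    (κ : ℕ) (x y : Fin n → ZMod d) (hx : x ≠ 0) (hy : y ≠ 0)
    (hxy : dotp x x = dotp y y) :
    (AsetX d n κ x).ncard = (AsetX d n κ y).ncard := by
  have : Fact d.Prime := ⟨hd⟩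
  have : NeZero (2 : ZMod d) := ⟨Ring.two_ne_zero (by rw [ZMod.ringChar_zmod_n]; omega)⟩
  obtain ⟨e, he, rfl⟩ := LinearMap.BilinForm.exists_isOrthogonal_apply_eq dotpForm_isSymm
    dotpForm_separatingLeft hx hy hxy
  have hpre : AsetX d n κ x = Submodule.map (e : (Fin n → ZMod d) →ₗ[ZMod d] _) ⁻¹'
      AsetX d n κ (e x) := by
    ext C
    exact (map_mem_asetX_iff he x C).symm
  rw [hpre, Set.ncard_preimage_of_injective_subset_range
    (Submodule.map_injective_of_injective e.injective)
    (fun D _ ↦ Submodule.map_surjective_of_surjective e.surjective D)]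

theorem stmt_4 (d : ℕ) [NeZero d] (hd : d.Prime) (hd3 : 3 ≤ d) (n : ℕ) (hn : 1 ≤ n)
    (κ : ℕ) (hκ : κ ≤ n) (x y : Fin n → ZMod d) (hx : x ≠ 0) (hy : y ≠ 0)
    (hxy : dotp x x = dotp y y) :
    (AsetX d n κ x).ncard = (AsetX d n κ y).ncard :=
  stmt_4_general d hd hd3 n κ x y hx hy hxy

end
end

section
/- Let d ≥ 3 be a prime, F = ℤ/dℤ, and let n ≥ d and 0 ≤ κ ≤ n be integers. Let A = {C ⊆ F^n : C is a linear subspace, C ⊆ C^⊥, dim_F C = κ}, and for x ∈ F^n let A_x = {C ∈ A : x ∈ C^⊥}. Then for every nonzero x ∈ F^n, |A_x| ≤ d^{−κ+d−1}·|A| (equivalently d^{κ}·|A_x| ≤ d^{d−1}·|A|), while trivially |A_x| ≤ |A| when x = 0. -/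
/- STATEMENT 5 (Corollary to the balancedness lemma, d ≥ 3, n ≥ d):
   |A_x| ≤ d^{−κ+d−1}·|A| for every nonzero x, and trivially |A_x| ≤ |A| when x = 0. -/

open scoped BigOperators

noncomputable section

namespace St5

variable {d n : ℕ}

lemma dotp_add_left (x y z : Fin n → ZMod d) : dotp (x + y) z = dotp x z + dotp y z := by
  simp [dotp, add_mul, Finset.sum_add_distrib]

lemma dotp_add_right (x y z : Fin n → ZMod d) : dotp x (y + z) = dotp x y + dotp x z := by
  simp [dotp, mul_add, Finset.sum_add_distrib]

lemma dotp_smul_left (c : ZMod d) (x y : Fin n → ZMod d) : dotp (c • x) y = c * dotp x y := by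
  simp [dotp, Finset.mul_sum, mul_assoc]

lemma dotp_smul_right (c : ZMod d) (x y : Fin n → ZMod d) : dotp x (c • y) = c * dotp x y := by
  simp [dotp, Finset.mul_sum]; exact Finset.sum_congr rfl fun i _ => by ring

lemma dotp_comm (x y : Fin n → ZMod d) : dotp x y = dotp y x :=
  Finset.sum_congr rfl fun i _ => mul_comm _ _

lemma dotp_neg_left (x y : Fin n → ZMod d) : dotp (-x) y = - dotp x y := by
  simp [dotp]

lemma dotp_neg_right (x y : Fin n → ZMod d) : dotp x (-y) = - dotp x y := by
  simp [dotp]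

lemma dotp_sub_left (x y z : Fin n → ZMod d) : dotp (x - y) z = dotp x z - dotp y z := by
  simp [sub_eq_add_neg, dotp_add_left, dotp_neg_left]

lemma dotp_sub_right (x y z : Fin n → ZMod d) : dotp x (y - z) = dotp x y - dotp x z := by
  simp [sub_eq_add_neg, dotp_add_right, dotp_neg_right]

lemma dotp_zero_right (y : Fin n → ZMod d) : dotp y 0 = 0 := by simp [dotp]

lemma dotp_single_left (i : Fin n) (c : ZMod d) (y : Fin n → ZMod d) :
    dotp (Pi.single i c) y = c * y i := by
  simp [dotp, Pi.single_apply, ite_mul]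

lemma exists_dotp_ne_zero {u : Fin n → ZMod d} (hu : u ≠ 0) : ∃ w, dotp u w ≠ 0 := by
  by_contra h
  push_neg at h
  apply hu
  funext i
  have := h (Pi.single i 1)
  rw [dotp_comm, dotp_single_left] at this
  simpa using this

/-- The dot product as a bilinear form. -/
def dotB (d n : ℕ) : LinearMap.BilinForm (ZMod d) (Fin n → ZMod d) :=
  LinearMap.mk₂ (ZMod d) dotp dotp_add_left dotp_smul_left dotp_add_right dotp_smul_right

@[simp] lemma dotB_apply (x y : Fin n → ZMod d) : dotB d n x y = dotp x y := rfl

lemma dotB_isRefl : (dotB d n).IsRefl := fun x y h => by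
  rw [dotB_apply, dotp_comm] at h; exact h

lemma dotB_nondeg [NeZero d] : (dotB d n).Nondegenerate := by
  refine ⟨fun x hx => ?_, fun x hx => ?_⟩
  · by_contra hx0
    obtain ⟨w, hw⟩ := exists_dotp_ne_zero hx0
    exact hw (hx w)
  · by_contra hx0
    obtain ⟨w, hw⟩ := exists_dotp_ne_zero hx0
    exact hw (by rw [dotp_comm]; exact hx w)

lemma dualSet_eq_orthogonal (C : Submodule (ZMod d) (Fin n → ZMod d)) :
    dualSet (C : Set (Fin n → ZMod d)) = ((dotB d n).orthogonal C : Set (Fin n → ZMod d)) := by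
  ext y
  simp [dualSet, LinearMap.BilinForm.mem_orthogonal_iff, LinearMap.BilinForm.IsOrtho]

set_option maxHeartbeats 1000000 in
lemma card_dualSet [NeZero d] (hd : d.Prime) {κ : ℕ}
    (C : Submodule (ZMod d) (Fin n → ZMod d)) (hC : Module.finrank (ZMod d) C = κ) :
    Nat.card (dualSet (C : Set (Fin n → ZMod d))) = d ^ (n - κ) := by
  haveI : Fact d.Prime := ⟨hd⟩
  rw [dualSet_eq_orthogonal, SetLike.coe_sort_coe]
  have h1 : Module.finrank (ZMod d) ((dotB d n).orthogonal C) = n - κ := by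
    rw [LinearMap.BilinForm.finrank_orthogonal dotB_nondeg, hC]
    congr 1
    simp [Module.finrank_pi]
  haveI : Fintype ((dotB d n).orthogonal C) := Fintype.ofFinite _
  rw [Nat.card_eq_fintype_card, Module.card_eq_pow_finrank (K := ZMod d), h1, ZMod.card]

lemma card_mul_card_fiber {α ι : Type*} [Finite α] [Fintype ι] (f : α → ι)
    (h : ∀ a b : ι, Nonempty ({x // f x = a} ≃ {x // f x = b})) (a : ι) :
    Nat.card ι * Nat.card {x // f x = a} = Nat.card α := by
  classical
  have e : α ≃ ι × {x // f x = a} :=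
    (Equiv.sigmaFiberEquiv f).symm.trans
      ((Equiv.sigmaCongrRight (fun i => (h i a).some)).trans (Equiv.sigmaEquivProd ι _))
  rw [Nat.card_congr e, Nat.card_prod]

lemma card_V [NeZero d] : Nat.card (Fin n → ZMod d) = d ^ n := by
  simp [Nat.card_pi, Nat.card_zmod]

lemma card_fiber_dotp [NeZero d] (hd : d.Prime) {u : Fin n → ZMod d} (hu : u ≠ 0) (b : ZMod d) :
    d * Nat.card {y : Fin n → ZMod d // dotp u y = b} = d ^ n := by
  haveI : Fact d.Prime := ⟨hd⟩
  obtain ⟨w, hw⟩ := exists_dotp_ne_zero hu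
  set y₀ : Fin n → ZMod d := (dotp u w)⁻¹ • w with hy₀
  have h1 : dotp u y₀ = 1 := by
    rw [hy₀, dotp_smul_right, inv_mul_cancel₀ hw]
  have key := card_mul_card_fiber (fun y : Fin n → ZMod d => dotp u y) ?_ b
  · rw [Nat.card_zmod, card_V] at key; exact key
  · intro a c
    refine ⟨⟨fun y => ⟨y.1 + (c - a) • y₀, ?_⟩, fun y => ⟨y.1 + (a - c) • y₀, ?_⟩,
      fun y => ?_, fun y => ?_⟩⟩
    · have hy : dotp u (y : Fin n → ZMod d) = a := y.2
      rw [dotp_add_right, dotp_smul_right, hy, h1]; ring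
    · have hy : dotp u (y : Fin n → ZMod d) = c := y.2
      rw [dotp_add_right, dotp_smul_right, hy, h1]; ring
    · ext1; simp; module
    · ext1; simp; module

lemma card_slice [NeZero d] (hd : d.Prime) (hd2 : (2 : ZMod d) ≠ 0) {u : Fin n → ZMod d}
    (hu : u ≠ 0) (hQu : dotp u u = 0) (a : ZMod d) (hn2 : 2 ≤ n) :
    Nat.card {y : Fin n → ZMod d // dotp u y = 1 ∧ dotp y y = a} = d ^ (n - 2) := by
  haveI : Fact d.Prime := ⟨hd⟩
  have hd0 : d ≠ 0 := hd.ne_zero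
  have hH : Nat.card {y : Fin n → ZMod d // dotp u y = 1} = d ^ (n - 1) := by
    have := card_fiber_dotp hd hu (1 : ZMod d)
    have hn1 : d ^ n = d * d ^ (n - 1) := by
      rw [← pow_succ']
      congr 1
      omega
    rw [hn1] at this
    exact Nat.eq_of_mul_eq_mul_left (Nat.pos_of_ne_zero hd0) this
  have key := card_mul_card_fiber
    (fun y : {y : Fin n → ZMod d // dotp u y = 1} => dotp y.1 y.1) ?_ a
  · rw [hH, Nat.card_zmod] at key
    have e : {x : {y : Fin n → ZMod d // dotp u y = 1} // dotp x.1 x.1 = a} ≃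
        {y : Fin n → ZMod d // dotp u y = 1 ∧ dotp y y = a} :=
      Equiv.subtypeSubtypeEquivSubtypeInter (fun y : Fin n → ZMod d => dotp u y = 1)
        (fun y => dotp y y = a)
    rw [Nat.card_congr e] at key
    have hn1 : d ^ (n - 1) = d * d ^ (n - 2) := by
      rw [← pow_succ']
      congr 1
      omega
    rw [hn1] at key
    exact Nat.eq_of_mul_eq_mul_left (Nat.pos_of_ne_zero hd0) key
  · intro i j
    refine ⟨⟨fun y => ⟨⟨y.1.1 + ((j - i) * 2⁻¹) • u, ?_⟩, ?_⟩,
      fun y => ⟨⟨y.1.1 + ((i - j) * 2⁻¹) • u, ?_⟩, ?_⟩, fun y => ?_, fun y => ?_⟩⟩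
    · rw [dotp_add_right, dotp_smul_right, y.1.2, hQu]; ring
    · have h1 := y.1.2
      have h2 : dotp y.1.1 y.1.1 = i := y.2
      dsimp only
      rw [dotp_add_left, dotp_add_right, dotp_add_right, dotp_smul_left, dotp_smul_right,
        dotp_smul_right, dotp_smul_left, h2, hQu, dotp_comm (y.1.1 : Fin n → ZMod d) u, h1]
      field_simp
      ring
    · rw [dotp_add_right, dotp_smul_right, y.1.2, hQu]; ring
    · have h1 := y.1.2
      have h2 : dotp y.1.1 y.1.1 = j := y.2
      dsimp only
      rw [dotp_add_left, dotp_add_right, dotp_add_right, dotp_smul_left, dotp_smul_right,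
        dotp_smul_right, dotp_smul_left, h2, hQu, dotp_comm (y.1.1 : Fin n → ZMod d) u, h1]
      field_simp
      ring
    · ext1; ext1; simp; module
    · ext1; ext1; simp; module

lemma exists_isotropic [NeZero d] (hd : d.Prime) (hn : 3 ≤ n) :
    ∃ u : Fin n → ZMod d, u ≠ 0 ∧ dotp u u = 0 := by
  haveI : Fact d.Prime := ⟨hd⟩
  obtain ⟨a, b, hab⟩ := ZMod.sq_add_sq d (-1)
  have h0 : (0 : ℕ) < n := by omega
  have h1 : (1 : ℕ) < n := by omega
  have h2 : (2 : ℕ) < n := by omega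
  refine ⟨(Pi.single (⟨0, h0⟩ : Fin n) (1 : ZMod d)) + (Pi.single (⟨1, h1⟩ : Fin n) a) +
    (Pi.single (⟨2, h2⟩ : Fin n) b), ?_, ?_⟩
  · intro h
    have := congrFun h ⟨0, h0⟩
    simp [Pi.single_apply] at this
  · rw [dotp_add_left, dotp_add_left, dotp_add_right, dotp_add_right, dotp_add_right,
      dotp_add_right, dotp_add_right, dotp_add_right]
    simp only [dotp_single_left]
    simp [Pi.single_apply]
    linear_combination hab

/-- The reflection in the hyperplane orthogonal to `v`, as a linear map. -/
def reflMap (v : Fin n → ZMod d) : (Fin n → ZMod d) →ₗ[ZMod d] (Fin n → ZMod d) :=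
  LinearMap.id - (dotB d n v).smulRight ((2 * (dotp v v)⁻¹) • v)

lemma reflMap_apply (v z : Fin n → ZMod d) :
    reflMap v z = z - (2 * (dotp v v)⁻¹ * dotp v z) • v := by
  simp only [reflMap, LinearMap.sub_apply, LinearMap.id_apply, LinearMap.smulRight_apply,
    dotB_apply, smul_smul]
  rw [mul_comm (dotp v z)]

lemma reflMap_involutive [NeZero d] (hdp : d.Prime) {v : Fin n → ZMod d}
    (hv : dotp v v ≠ 0) : Function.Involutive (reflMap v) := by
  haveI : Fact d.Prime := ⟨hdp⟩
  intro z
  rw [reflMap_apply, reflMap_apply, dotp_sub_right, dotp_smul_right]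
  set s := dotp v z
  set Q := dotp v v
  have h1 : (2 * Q⁻¹ * (s - 2 * Q⁻¹ * s * Q)) = - (2 * Q⁻¹ * s) := by
    field_simp
    ring
  rw [h1, neg_smul, sub_neg_eq_add, sub_add_cancel]

/-- The reflection as a linear equivalence. -/
def reflEquiv [NeZero d] (hdp : d.Prime) (v : Fin n → ZMod d) (hv : dotp v v ≠ 0) :
    (Fin n → ZMod d) ≃ₗ[ZMod d] (Fin n → ZMod d) :=
  LinearEquiv.ofInvolutive (reflMap v) (reflMap_involutive hdp hv)

lemma reflEquiv_apply [NeZero d] (hdp : d.Prime) (v : Fin n → ZMod d) (hv : dotp v v ≠ 0)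
    (z : Fin n → ZMod d) :
    reflEquiv hdp v hv z = z - (2 * (dotp v v)⁻¹ * dotp v z) • v := reflMap_apply v z

lemma reflEquiv_preserves [NeZero d] (hdp : d.Prime) (v : Fin n → ZMod d) (hv : dotp v v ≠ 0)
    (z w : Fin n → ZMod d) :
    dotp (reflEquiv hdp v hv z) (reflEquiv hdp v hv w) = dotp z w := by
  haveI : Fact d.Prime := ⟨hdp⟩
  rw [reflEquiv_apply, reflEquiv_apply]
  simp only [dotp_sub_left, dotp_sub_right, dotp_smul_left, dotp_smul_right]
  rw [dotp_comm z v]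
  set Q := dotp v v
  set sz := dotp v z
  set sw := dotp v w
  field_simp
  ring

/-- Isometries map `AsetX x` to `AsetX (g x)`. -/
lemma map_mem_AsetX {κ : ℕ} (g : (Fin n → ZMod d) ≃ₗ[ZMod d] (Fin n → ZMod d))
    (hg : ∀ z w, dotp (g z) (g w) = dotp z w) (x : Fin n → ZMod d)
    {C : Submodule (ZMod d) (Fin n → ZMod d)} (hC : C ∈ AsetX d n κ x) :
    C.map (g : (Fin n → ZMod d) →ₗ[ZMod d] (Fin n → ZMod d)) ∈ AsetX d n κ (g x) := by
  obtain ⟨⟨hso, hrk⟩, hx⟩ := hC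
  refine ⟨⟨?_, ?_⟩, ?_⟩
  · rintro z ⟨c, hc, rfl⟩ z' ⟨c', hc', rfl⟩
    simp only [LinearEquiv.coe_coe]
    rw [hg]
    exact hso hc c' hc'
  · rw [LinearEquiv.finrank_map_eq]
    exact hrk
  · rintro z ⟨c, hc, rfl⟩
    simp only [LinearEquiv.coe_coe]
    rw [hg]
    exact hx c hc

lemma card_AsetX_map {κ : ℕ} (g : (Fin n → ZMod d) ≃ₗ[ZMod d] (Fin n → ZMod d))
    (hg : ∀ z w, dotp (g z) (g w) = dotp z w) (x : Fin n → ZMod d) :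
    Nat.card (AsetX d n κ (g x)) = Nat.card (AsetX d n κ x) := by
  have hg' : ∀ z w, dotp (g.symm z) (g.symm w) = dotp z w := by
    intro z w
    have h := hg (g.symm z) (g.symm w)
    rw [g.apply_symm_apply, g.apply_symm_apply] at h
    exact h.symm
  have himg : AsetX d n κ (g x) =
      (fun C : Submodule (ZMod d) (Fin n → ZMod d) =>
        C.map (g : (Fin n → ZMod d) →ₗ[ZMod d] (Fin n → ZMod d))) '' (AsetX d n κ x) := by
    apply Set.eq_of_subset_of_subset
    · intro C' hC'
      refine ⟨C'.map (g.symm : (Fin n → ZMod d) →ₗ[ZMod d] (Fin n → ZMod d)), ?_, ?_⟩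
      · have h2 := map_mem_AsetX g.symm hg' (g x) hC'
        rwa [g.symm_apply_apply] at h2
      · show Submodule.map _ (Submodule.map _ C') = C'
        ext z
        simp only [Submodule.mem_map, LinearEquiv.coe_coe]
        constructor
        · rintro ⟨w, ⟨w', hw', rfl⟩, rfl⟩
          rwa [g.apply_symm_apply]
        · intro hz
          exact ⟨g.symm z, ⟨z, hz, rfl⟩, g.apply_symm_apply z⟩
    · rintro _ ⟨C, hC, rfl⟩
      exact map_mem_AsetX g hg x hC
  rw [himg, Nat.card_coe_set_eq, Nat.card_coe_set_eq]
  exact Set.ncard_image_of_injective _ (Submodule.map_injective_of_injective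
    (show Function.Injective (g : (Fin n → ZMod d) →ₗ[ZMod d] (Fin n → ZMod d))
      from g.injective))

/-- For `y` of the same norm as `x`, with an extra condition in the isotropic case,
there is an isometry moving `x` to `y`. -/
lemma exists_isometry_to [NeZero d] (hdp : d.Prime) (hd2 : (2 : ZMod d) ≠ 0)
    {x y : Fin n → ZMod d} (hQ : dotp x x = dotp y y)
    (hkey : dotp x x ≠ 0 ∨ dotp x y ≠ 0) :
    ∃ g : (Fin n → ZMod d) ≃ₗ[ZMod d] (Fin n → ZMod d),
      (∀ z w, dotp (g z) (g w) = dotp z w) ∧ g x = y := by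
  haveI : Fact d.Prime := ⟨hdp⟩
  set a := dotp x x with ha
  set s := dotp x y with hs
  have hQxy : dotp (x - y) (x - y) = 2 * a - 2 * s := by
    rw [dotp_sub_left, dotp_sub_right, dotp_sub_right, ← ha, ← hs, dotp_comm y x, ← hs, ← hQ]
    ring
  by_cases hv : dotp (x - y) (x - y) ≠ 0
  · refine ⟨reflEquiv hdp (x - y) hv, reflEquiv_preserves hdp _ hv, ?_⟩
    rw [reflEquiv_apply]
    have hxv : dotp (x - y) x = a - s := by
      rw [dotp_sub_left, ← ha, dotp_comm y x, ← hs]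
    have has : a - s ≠ 0 := by
      intro h
      apply hv
      rw [hQxy]
      rw [sub_eq_zero] at h
      rw [h]; ring
    rw [hxv]
    have : (2 * (dotp (x - y) (x - y))⁻¹ * (a - s)) = 1 := by
      rw [hQxy]
      have h2 : 2 * a - 2 * s = 2 * (a - s) := by ring
      rw [h2, mul_inv]
      field_simp
    rw [this, one_smul, sub_sub_cancel]
  · push_neg at hv
    have has : a = s := by
      rw [hQxy] at hv
      have h2 : 2 * (a - s) = 0 := by linear_combination hv
      rcases mul_eq_zero.1 h2 with h | h
      · exact absurd h hd2
      · exact sub_eq_zero.1 h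
    have hane : a ≠ 0 := by
      rcases hkey with h | h
      · exact h
      · rw [has]; exact h
    have hQv' : dotp (x + y) (x + y) = 4 * a := by
      rw [dotp_add_left, dotp_add_right, dotp_add_right, ← ha, dotp_comm y x, ← hs, ← hQ, ← has]
      ring
    have hv' : dotp (x + y) (x + y) ≠ 0 := by
      rw [hQv']
      intro h
      rcases mul_eq_zero.1 h with h4 | h
      · have : (4 : ZMod d) = 2 * 2 := by norm_num
        rw [this] at h4
        rcases mul_eq_zero.1 h4 with h | h <;> exact hd2 h
      · exact hane h
    refine ⟨(reflEquiv hdp (x + y) hv').trans (LinearEquiv.neg (ZMod d)), ?_, ?_⟩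
    · intro z w
      simp only [LinearEquiv.trans_apply, LinearEquiv.neg_apply]
      rw [dotp_neg_left, dotp_neg_right, neg_neg, reflEquiv_preserves]
    · simp only [LinearEquiv.trans_apply, LinearEquiv.neg_apply]
      rw [reflEquiv_apply]
      have hxv : dotp (x + y) x = 2 * a := by
        rw [dotp_add_left, ← ha, dotp_comm y x, ← hs, ← has]; ring
      rw [hxv, hQv']
      have : (2 * (4 * a)⁻¹ * (2 * a)) = 1 := by
        have h4 : (4 : ZMod d) ≠ 0 := by
          intro h
          have : (4 : ZMod d) = 2 * 2 := by norm_num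
          rw [this] at h
          rcases mul_eq_zero.1 h with h | h <;> exact hd2 h
        field_simp
        ring
      rw [this, one_smul]
      abel


lemma main_count [NeZero d] (hd : d.Prime) (hd2 : (2 : ZMod d) ≠ 0) (hn3 : 3 ≤ n) (κ : ℕ)
    {x : Fin n → ZMod d} (hx : x ≠ 0) :
    d ^ (n - 2) * Nat.card (AsetX d n κ x) ≤ Nat.card (Aset d n κ) * d ^ (n - κ) := by
  haveI : Fact d.Prime := ⟨hd⟩
  haveI : Finite (Submodule (ZMod d) (Fin n → ZMod d)) :=
    Finite.of_injective (fun C => (C : Set (Fin n → ZMod d))) SetLike.coe_injective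
  -- choose an isotropic direction `u` governing the slice of vectors `y` isometric to `x`
  obtain ⟨u, hu0, hQu, hiso⟩ : ∃ u : Fin n → ZMod d, u ≠ 0 ∧ dotp u u = 0 ∧
      (∀ y : Fin n → ZMod d, dotp u y = 1 → dotp y y = dotp x x →
        ∃ g : (Fin n → ZMod d) ≃ₗ[ZMod d] (Fin n → ZMod d),
          (∀ z w, dotp (g z) (g w) = dotp z w) ∧ g x = y) := by
    by_cases hA : dotp x x = 0
    · refine ⟨x, hx, hA, ?_⟩
      intro y h1 h2
      exact exists_isometry_to hd hd2 h2.symm (Or.inr (by rw [h1]; exact one_ne_zero))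
    · obtain ⟨u, hu0, hQu⟩ := exists_isotropic hd hn3
      refine ⟨u, hu0, hQu, ?_⟩
      intro y h1 h2
      exact exists_isometry_to hd hd2 h2.symm (Or.inl hA)
  have hU : Nat.card {y : Fin n → ZMod d // dotp u y = 1 ∧ dotp y y = dotp x x} = d ^ (n - 2) :=
    card_slice hd hd2 hu0 hQu _ (by omega)
  have hgy : ∀ y : {y : Fin n → ZMod d // dotp u y = 1 ∧ dotp y y = dotp x x},
      ∃ g : (Fin n → ZMod d) ≃ₗ[ZMod d] (Fin n → ZMod d),
        (∀ z w, dotp (g z) (g w) = dotp z w) ∧ g x = y.1 :=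
    fun y => hiso y.1 y.2.1 y.2.2
  choose g hgp hgx using hgy
  -- the injection into pairs (code, nonzero dual vector)
  have hΦmem : ∀ (y : {y : Fin n → ZMod d // dotp u y = 1 ∧ dotp y y = dotp x x})
      (C : AsetX d n κ x),
      (C : Submodule (ZMod d) (Fin n → ZMod d)).map
        ((g y : (Fin n → ZMod d) ≃ₗ[ZMod d] (Fin n → ZMod d)) :
          (Fin n → ZMod d) →ₗ[ZMod d] (Fin n → ZMod d)) ∈ AsetX d n κ y.1 := by
    intro y C
    have h := map_mem_AsetX (g y) (hgp y) x C.2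
    rwa [hgx y] at h
  have hyne : ∀ y : {y : Fin n → ZMod d // dotp u y = 1 ∧ dotp y y = dotp x x},
      y.1 ≠ 0 := by
    intro y h0
    have := y.2.1
    rw [h0, dotp_zero_right] at this
    exact one_ne_zero this.symm
  let Φ : ({y : Fin n → ZMod d // dotp u y = 1 ∧ dotp y y = dotp x x} × (AsetX d n κ x)) → ({p : (Aset d n κ) × (Fin n → ZMod d) //
    p.2 ∈ dualSet ((p.1 : Submodule (ZMod d) (Fin n → ZMod d)) : Set (Fin n → ZMod d)) ∧
    p.2 ≠ 0}) :=
    fun p => ⟨(⟨(p.2 : Submodule (ZMod d) (Fin n → ZMod d)).map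
        ((g p.1 : (Fin n → ZMod d) ≃ₗ[ZMod d] (Fin n → ZMod d)) :
          (Fin n → ZMod d) →ₗ[ZMod d] (Fin n → ZMod d)), (hΦmem p.1 p.2).1⟩, p.1.1),
      (hΦmem p.1 p.2).2, hyne p.1⟩
  have hinj : Function.Injective Φ := by
    rintro ⟨y, C⟩ ⟨y', C'⟩ h
    have h2 : y.1 = y'.1 := congrArg (fun q : ({p : (Aset d n κ) × (Fin n → ZMod d) //
    p.2 ∈ dualSet ((p.1 : Submodule (ZMod d) (Fin n → ZMod d)) : Set (Fin n → ZMod d)) ∧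
    p.2 ≠ 0}) => q.1.2) h
    have hyy : y = y' := Subtype.ext h2
    subst hyy
    have h1 : (C : Submodule (ZMod d) (Fin n → ZMod d)).map
          ((g y : (Fin n → ZMod d) ≃ₗ[ZMod d] (Fin n → ZMod d)) :
            (Fin n → ZMod d) →ₗ[ZMod d] (Fin n → ZMod d)) =
        (C' : Submodule (ZMod d) (Fin n → ZMod d)).map
          ((g y : (Fin n → ZMod d) ≃ₗ[ZMod d] (Fin n → ZMod d)) :
            (Fin n → ZMod d) →ₗ[ZMod d] (Fin n → ZMod d)) :=
      congrArg (fun q : ({p : (Aset d n κ) × (Fin n → ZMod d) //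
    p.2 ∈ dualSet ((p.1 : Submodule (ZMod d) (Fin n → ZMod d)) : Set (Fin n → ZMod d)) ∧
    p.2 ≠ 0}) => (q.1.1 : Submodule (ZMod d) (Fin n → ZMod d))) h
    have h3 := Submodule.map_injective_of_injective
      (show Function.Injective ((g y : (Fin n → ZMod d) ≃ₗ[ZMod d] (Fin n → ZMod d)) :
        (Fin n → ZMod d) →ₗ[ZMod d] (Fin n → ZMod d)) from (g y).injective) h1
    exact Prod.ext rfl (Subtype.ext h3)
  have hle : Nat.card ({y : Fin n → ZMod d // dotp u y = 1 ∧ dotp y y = dotp x x} ×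
      (AsetX d n κ x)) ≤ Nat.card ({p : (Aset d n κ) × (Fin n → ZMod d) //
    p.2 ∈ dualSet ((p.1 : Submodule (ZMod d) (Fin n → ZMod d)) : Set (Fin n → ZMod d)) ∧
    p.2 ≠ 0}) := Nat.card_le_card_of_injective Φ hinj
  rw [Nat.card_prod, hU] at hle
  have hfib : ∀ C : (Aset d n κ),
      Nat.card {y : Fin n → ZMod d //
        y ∈ dualSet ((C : Submodule (ZMod d) (Fin n → ZMod d)) :
          Set (Fin n → ZMod d)) ∧ y ≠ 0} = d ^ (n - κ) - 1 := by
    intro C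
    have hD := card_dualSet hd (C : Submodule (ZMod d) (Fin n → ZMod d)) C.2.2
    have e2 : {y : Fin n → ZMod d //
        y ∈ dualSet ((C : Submodule (ZMod d) (Fin n → ZMod d)) :
          Set (Fin n → ZMod d)) ∧ y ≠ 0} ≃
        ↥((dualSet ((C : Submodule (ZMod d) (Fin n → ZMod d)) :
          Set (Fin n → ZMod d))) \ {0}) :=
      Equiv.subtypeEquivRight (fun y => by simp [Set.mem_diff, and_comm])
    have h0mem : (0 : Fin n → ZMod d) ∈ dualSet
        ((C : Submodule (ZMod d) (Fin n → ZMod d)) : Set (Fin n → ZMod d)) :=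
      fun z _ => dotp_zero_right z
    rw [Nat.card_congr e2, Nat.card_coe_set_eq,
      Set.ncard_diff_singleton_of_mem h0mem, ← Nat.card_coe_set_eq, hD]
  have hQt : Nat.card ({p : (Aset d n κ) × (Fin n → ZMod d) //
    p.2 ∈ dualSet ((p.1 : Submodule (ZMod d) (Fin n → ZMod d)) : Set (Fin n → ZMod d)) ∧
    p.2 ≠ 0}) = Nat.card (Aset d n κ) * (d ^ (n - κ) - 1) := by
    haveI : Fintype (Fin n → ZMod d) := Fintype.ofFinite _
    have e1 : ({p : (Aset d n κ) × (Fin n → ZMod d) //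
    p.2 ∈ dualSet ((p.1 : Submodule (ZMod d) (Fin n → ZMod d)) : Set (Fin n → ZMod d)) ∧
    p.2 ≠ 0}) ≃ Σ C : (Aset d n κ), {y : Fin n → ZMod d //
        y ∈ dualSet ((C : Submodule (ZMod d) (Fin n → ZMod d)) :
          Set (Fin n → ZMod d)) ∧ y ≠ 0} :=
      Equiv.subtypeProdEquivSigmaSubtype
        (fun (C : (Aset d n κ)) (y : Fin n → ZMod d) =>
          y ∈ dualSet ((C : Submodule (ZMod d) (Fin n → ZMod d)) : Set (Fin n → ZMod d)) ∧
          y ≠ 0)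
    have e3 : ∀ C : (Aset d n κ), {y : Fin n → ZMod d //
        y ∈ dualSet ((C : Submodule (ZMod d) (Fin n → ZMod d)) :
          Set (Fin n → ZMod d)) ∧ y ≠ 0} ≃ Fin (d ^ (n - κ) - 1) := by
      intro C
      haveI : Fintype {y : Fin n → ZMod d //
        y ∈ dualSet ((C : Submodule (ZMod d) (Fin n → ZMod d)) :
          Set (Fin n → ZMod d)) ∧ y ≠ 0} := Fintype.ofFinite _
      apply Fintype.equivFinOfCardEq
      rw [← Nat.card_eq_fintype_card]
      exact hfib C
    have e4 : ({p : (Aset d n κ) × (Fin n → ZMod d) //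
    p.2 ∈ dualSet ((p.1 : Submodule (ZMod d) (Fin n → ZMod d)) : Set (Fin n → ZMod d)) ∧
    p.2 ≠ 0}) ≃ (Aset d n κ) × Fin (d ^ (n - κ) - 1) :=
      e1.trans ((Equiv.sigmaCongrRight e3).trans (Equiv.sigmaEquivProd _ _))
    rw [Nat.card_congr e4, Nat.card_prod]
    simp
  rw [hQt] at hle
  exact hle.trans (Nat.mul_le_mul_left _ (Nat.sub_le _ _))

end St5

theorem stmt_5 (d : ℕ) [NeZero d] (hd : d.Prime) (hd3 : 3 ≤ d) (n : ℕ) (hn : d ≤ n)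
    (κ : ℕ) (hκ : κ ≤ n) (x : Fin n → ZMod d) :
    (x ≠ 0 →
      ((AsetX d n κ x).ncard : ℝ) ≤
        (d : ℝ) ^ (-(κ : ℝ) + (d : ℝ) - 1) * ((Aset d n κ).ncard : ℝ)) ∧
    (x = 0 → (AsetX d n κ x).ncard ≤ (Aset d n κ).ncard) := by
  haveI : Fact d.Prime := ⟨hd⟩
  haveI : Finite (Submodule (ZMod d) (Fin n → ZMod d)) :=
    Finite.of_injective (fun C => (C : Set (Fin n → ZMod d))) SetLike.coe_injective
  constructor
  · intro hx
    have hd2 : (2 : ZMod d) ≠ 0 := by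
      intro h
      have h2 : ((2 : ℕ) : ZMod d) = 0 := by exact_mod_cast h
      have h3 := (ZMod.natCast_eq_zero_iff 2 d).1 h2
      have h4 := Nat.le_of_dvd (by norm_num) h3
      omega
    have key := St5.main_count hd hd2 (by omega) κ hx
    have h2n : (2 : ℕ) ≤ n := by omega
    have hdpos : (0 : ℝ) < (d : ℝ) := by
      have : (3 : ℝ) ≤ (d : ℝ) := by exact_mod_cast hd3
      linarith
    have keyR : (d : ℝ) ^ ((n : ℝ) - 2) * ((AsetX d n κ x).ncard : ℝ) ≤
        ((Aset d n κ).ncard : ℝ) * (d : ℝ) ^ ((n : ℝ) - (κ : ℝ)) := by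
      have h1 : ((d ^ (n - 2) * Nat.card (AsetX d n κ x) : ℕ) : ℝ) ≤
          ((Nat.card (Aset d n κ) * d ^ (n - κ) : ℕ) : ℝ) := Nat.cast_le.2 key
      push_cast at h1
      rw [Nat.card_coe_set_eq, Nat.card_coe_set_eq] at h1
      have e1 : (d : ℝ) ^ ((n : ℝ) - 2) = (d : ℝ) ^ ((n - 2 : ℕ)) := by
        rw [← Real.rpow_natCast (d : ℝ) (n - 2)]
        congr 1
        rw [Nat.cast_sub h2n]
        norm_num
      have e2 : (d : ℝ) ^ ((n : ℝ) - (κ : ℝ)) = (d : ℝ) ^ ((n - κ : ℕ)) := by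
        rw [← Real.rpow_natCast (d : ℝ) (n - κ)]
        congr 1
        rw [Nat.cast_sub hκ]
      rw [e1, e2]
      exact h1
    have hbpos : (0 : ℝ) < (d : ℝ) ^ ((n : ℝ) - 2) := Real.rpow_pos_of_pos hdpos _
    have hstep : ((AsetX d n κ x).ncard : ℝ) ≤
        (d : ℝ) ^ ((n : ℝ) - (κ : ℝ) - ((n : ℝ) - 2)) * ((Aset d n κ).ncard : ℝ) := by
      rw [Real.rpow_sub hdpos, div_mul_eq_mul_div, le_div_iff₀ hbpos]
      nlinarith [keyR]
    have hexp : (n : ℝ) - (κ : ℝ) - ((n : ℝ) - 2) = 2 - (κ : ℝ) := by ring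
    rw [hexp] at hstep
    refine hstep.trans ?_
    refine mul_le_mul_of_nonneg_right ?_ (Nat.cast_nonneg _)
    refine Real.rpow_le_rpow_of_exponent_le (by exact_mod_cast hd.one_lt.le) ?_
    have : (3 : ℝ) ≤ (d : ℝ) := by exact_mod_cast hd3
    linarith
  · intro _
    exact Set.ncard_le_ncard (fun C hC => hC.1) (Set.toFinite _)

end
end

section
/- Let d ≥ 3 be a prime, F = ℤ/dℤ, let n ≥ d and 0 ≤ κ ≤ n/2 be integers, and let A = {C ⊆ F^n : C is a linear subspace, C ⊆ C^⊥, dim_F C = κ}; assume A is nonempty. Then there exists C ∈ A such that for every type Q ∈ P_n(F) with Q ≠ P_{0^n}, N(Q,C^⊥) ≤ |P_n(F)|·|T_Q^n|·d^{−κ+d−1}, where N(Q,C^⊥) = |{x ∈ C^⊥ : P_x = Q}|. -/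
/- STATEMENT 7 (Corollary: existence of a balanced-weight-spectrum code):
   there is C ∈ A with N(Q,C^⊥) ≤ |P_n(F)|·|T_Q^n|·d^{−κ+d−1} for every type Q ≠ P_{0ⁿ}. -/

open scoped BigOperators

noncomputable section

open Classical in
/-- The type (empirical distribution) of a string `y ∈ Yⁿ`. -/
def typeOf {Y : Type*} [Fintype Y] {n : ℕ} (y : Fin n → Y) : Y → ℝ :=
  fun a => ((Finset.univ.filter fun i => y i = a).card : ℝ) / n

/-- `P_n(Y)`, the set of all types of sequences in `Yⁿ`. -/
def typesSet (Y : Type*) [Fintype Y] (n : ℕ) : Set (Y → ℝ) :=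
  {Q | ∃ y : Fin n → Y, Q = typeOf y}

/-- `T_Q^n = {y ∈ Yⁿ : P_y = Q}`, the set of strings of type `Q`. -/
def typeClass {Y : Type*} [Fintype Y] (n : ℕ) (Q : Y → ℝ) : Set (Fin n → Y) :=
  {y | typeOf y = Q}

/-- `N(Q,S) = |{x ∈ S : P_x = Q}|`, the number of strings in `S` of type `Q`. -/
def Ncount {Y : Type*} [Fintype Y] {n : ℕ} (Q : Y → ℝ) (S : Set (Fin n → Y)) : ℕ :=
  {x ∈ S | typeOf x = Q}.ncard


namespace S7
open scoped Classical
variable {d n : ℕ}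

lemma dotp_comm (x y : Fin n → ZMod d) : dotp x y = dotp y x :=
  Finset.sum_congr rfl fun i _ => mul_comm _ _
lemma dotp_add_right (x y z : Fin n → ZMod d) : dotp x (y + z) = dotp x y + dotp x z := by
  simp [dotp, mul_add, Finset.sum_add_distrib]
lemma dotp_smul_right (c : ZMod d) (x y : Fin n → ZMod d) : dotp x (c • y) = c * dotp x y := by
  simp [dotp, Finset.mul_sum]; exact Finset.sum_congr rfl fun i _ => by ring
lemma dotp_sub_left (x y z : Fin n → ZMod d) : dotp (x - y) z = dotp x z - dotp y z := by
  simp [dotp, sub_mul, Finset.sum_sub_distrib]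
lemma dotp_sub_right (x y z : Fin n → ZMod d) : dotp x (y - z) = dotp x y - dotp x z := by
  simp [dotp, mul_sub, Finset.sum_sub_distrib]
lemma dotp_smul_left (c : ZMod d) (x y : Fin n → ZMod d) : dotp (c • x) y = c * dotp x y := by
  simp [dotp, Finset.mul_sum, mul_assoc]

def dFun (w : Fin n → ZMod d) : (Fin n → ZMod d) →ₗ[ZMod d] ZMod d where
  toFun x := dotp w x
  map_add' := dotp_add_right w
  map_smul' c x := dotp_smul_right c w x

variable [Fact (Nat.Prime d)]

/-- reflection in `w`, for `w·w ≠ 0` -/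
def rfl' (w : Fin n → ZMod d) (hw : dotp w w ≠ 0) :
    (Fin n → ZMod d) ≃ₗ[ZMod d] (Fin n → ZMod d) :=
  Module.reflection (x := w) (f := (2 * (dotp w w)⁻¹) • dFun w)
    (by simp only [LinearMap.smul_apply, dFun, LinearMap.coe_mk, AddHom.coe_mk, smul_eq_mul]
        field_simp)

lemma rfl'_apply (w : Fin n → ZMod d) (hw : dotp w w ≠ 0) (x : Fin n → ZMod d) :
    rfl' w hw x = x - (2 * (dotp w w)⁻¹ * dotp w x) • w := by
  rw [rfl', Module.reflection_apply]; rfl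

lemma rfl'_isom (w : Fin n → ZMod d) (hw : dotp w w ≠ 0) (x y : Fin n → ZMod d) :
    dotp (rfl' w hw x) (rfl' w hw y) = dotp x y := by
  rw [rfl'_apply, rfl'_apply, dotp_sub_left, dotp_sub_right, dotp_sub_right,
    dotp_smul_left, dotp_smul_left, dotp_smul_right, dotp_smul_right,
    dotp_comm w x, dotp_comm w y]
  field_simp
  ring

lemma dotp_add_left (x y z : Fin n → ZMod d) : dotp (x + y) z = dotp x z + dotp y z := by
  simp [dotp, add_mul, Finset.sum_add_distrib]

lemma exists_dotp_ne_zero {x : Fin n → ZMod d} (hx : x ≠ 0) : ∃ z, dotp x z ≠ 0 := by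
  obtain ⟨i, hi⟩ := Function.ne_iff.mp hx
  refine ⟨Pi.single i 1, ?_⟩
  have h : dotp x (Pi.single i 1) = x i := by
    simp [dotp, Pi.single_apply, Finset.sum_ite_eq]
  simpa [h] using hi

lemma two_ne_zero' (hd3 : 3 ≤ d) : (2 : ZMod d) ≠ 0 := by
  have : ((2 : ℕ) : ZMod d) ≠ 0 := by
    rw [Ne, ZMod.natCast_eq_zero_iff]
    intro h
    have := Nat.le_of_dvd (by norm_num) h
    omega
  simpa using this

variable [Fact (Nat.Prime d)] [NeZero d]

/-- The isometry group of the dot product. -/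
def Giso (d n : ℕ) [Fact (Nat.Prime d)] :
    Subgroup ((Fin n → ZMod d) ≃ₗ[ZMod d] (Fin n → ZMod d)) where
  carrier := {g | ∀ x y, dotp (g x) (g y) = dotp x y}
  mul_mem' := fun {f g} hf hg x y => by
    have : (f * g) x = f (g x) := rfl
    simp only [this, show (f * g) y = f (g y) from rfl]
    rw [hf, hg]
  one_mem' := fun x y => rfl
  inv_mem' := fun {g} hg x y => by
    have := hg (g.symm x) (g.symm y)
    simp only [LinearEquiv.apply_symm_apply] at this
    exact this.symm

lemma giso_isom {g : (Fin n → ZMod d) ≃ₗ[ZMod d] (Fin n → ZMod d)}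
    (hg : g ∈ Giso d n) : ∀ x y, dotp (g x) (g y) = dotp x y := hg

lemma rfl'_mem (w : Fin n → ZMod d) (hw : dotp w w ≠ 0) : rfl' w hw ∈ Giso d n :=
  fun x y => rfl'_isom w hw x y


/-- reflection in `u - v` sends `u` to `v` when `u·u = v·v`. -/
lemma rfl'_sub_apply {u v : Fin n → ZMod d} (h : dotp u u = dotp v v)
    (hw : dotp (u - v) (u - v) ≠ 0) : rfl' (u - v) hw u = v := by
  have h2 : (2 : ZMod d) ≠ 0 := by
    intro h2
    apply hw
    rw [dotp_sub_left, dotp_sub_right, dotp_sub_right, dotp_comm v u, h]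
    have : dotp v v - dotp u v - (dotp u v - dotp v v) = 2 * (dotp v v - dotp u v) := by ring
    rw [this, h2, zero_mul]
  have hww : dotp (u - v) (u - v) = 2 * (dotp u u - dotp u v) := by
    rw [dotp_sub_left, dotp_sub_right, dotp_sub_right, dotp_comm v u, h]; ring
  have hs : dotp u u - dotp u v ≠ 0 := by
    intro h0; apply hw; rw [hww, h0, mul_zero]
  have hwu : dotp (u - v) u = dotp u u - dotp u v := by
    rw [dotp_sub_left, dotp_comm v u]
  rw [rfl'_apply, hwu, hww]
  have : 2 * (2 * (dotp u u - dotp u v))⁻¹ * (dotp u u - dotp u v) = 1 := by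
    field_simp
  rw [this, one_smul, sub_sub_cancel]

lemma exists_hyp (hd3 : 3 ≤ d) {u : Fin n → ZMod d} (hu : u ≠ 0) (hu0 : dotp u u = 0) :
    ∃ w, dotp w w = 0 ∧ dotp u w = 1 := by
  obtain ⟨z, hz⟩ := exists_dotp_ne_zero hu
  have h2 : (2 : ZMod d) ≠ 0 := two_ne_zero' hd3
  set a : ZMod d := (dotp u z)⁻¹ with ha
  refine ⟨a • z - (a ^ 2 * dotp z z * 2⁻¹) • u, ?_, ?_⟩
  · simp only [dotp_sub_left, dotp_sub_right, dotp_smul_left, dotp_smul_right, hu0,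
      dotp_comm z u]
    field_simp
    have hc : a * dotp u z = 1 := inv_mul_cancel₀ hz
    linear_combination (-(4 * a ^ 2 * dotp z z)) * hc
  · simp only [dotp_sub_right, dotp_smul_right, hu0, mul_zero, sub_zero]
    exact inv_mul_cancel₀ hz

/-- transitivity of the isometry group on nonzero vectors of a given square. -/
lemma exists_isom (hd3 : 3 ≤ d) {x y : Fin n → ZMod d} (hx : x ≠ 0) (hy : y ≠ 0)
    (hxy : dotp x x = dotp y y) : ∃ g ∈ Giso d n, g x = y := by
  have h2 : (2 : ZMod d) ≠ 0 := two_ne_zero' hd3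
  by_cases hw : dotp (x - y) (x - y) ≠ 0
  · exact ⟨rfl' (x - y) hw, rfl'_mem _ hw, rfl'_sub_apply hxy hw⟩
  push_neg at hw
  have hww : dotp (x - y) (x - y) = 2 * (dotp x x - dotp x y) := by
    rw [dotp_sub_left, dotp_sub_right, dotp_sub_right, dotp_comm y x, hxy]; ring
  have hxyc : dotp x y = dotp x x := by
    have := hw; rw [hww] at this
    rcases mul_eq_zero.mp this with h | h
    · exact absurd h h2
    · linear_combination -h
  by_cases hc : dotp x x ≠ 0
  · -- w = x + y, then reflect in y
    have hwplus : dotp (x + y) (x + y) = 4 * dotp x x := by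
      rw [dotp_add_left, dotp_add_right, dotp_add_right, dotp_comm y x, hxyc, ← hxy]; ring
    have h4 : (4 : ZMod d) ≠ 0 := by
      have : (4 : ZMod d) = 2 * 2 := by norm_num
      rw [this]; exact mul_ne_zero h2 h2
    have hwp : dotp (x + y) (x + y) ≠ 0 := by rw [hwplus]; exact mul_ne_zero h4 hc
    have hyy : dotp y y ≠ 0 := by rw [← hxy]; exact hc
    refine ⟨rfl' y hyy * rfl' (x + y) hwp, mul_mem (rfl'_mem _ _) (rfl'_mem _ _), ?_⟩
    have step1 : rfl' (x + y) hwp x = -y := by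
      rw [rfl'_apply]
      have hwx : dotp (x + y) x = 2 * dotp x x := by
        rw [dotp_add_left, dotp_comm y x, hxyc]; ring
      rw [hwx, hwplus]
      have : 2 * (4 * dotp x x)⁻¹ * (2 * dotp x x) = 1 := by
        field_simp; ring
      rw [this, one_smul]; abel
    have step2 : rfl' y hyy (-y) = y := by
      rw [rfl'_apply]
      have : dotp y (-y) = - dotp y y := by
        have := dotp_sub_right y 0 y
        simpa [dotp] using this
      rw [this]
      have : 2 * (dotp y y)⁻¹ * -dotp y y = -2 := by field_simp
      rw [this]
      simp [two_smul]
    show rfl' y hyy (rfl' (x + y) hwp x) = y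
    rw [step1, step2]
  · -- isotropic case
    push_neg at hc
    have hyc : dotp y y = 0 := by rw [← hxy]; exact hc
    have hxy0 : dotp x y = 0 := by rw [hxyc]; exact hc
    -- find w isotropic with x·w ≠ 0 and y·w ≠ 0
    have key : ∃ w, dotp w w = 0 ∧ dotp x w ≠ 0 ∧ dotp y w ≠ 0 := by
      obtain ⟨w0, hw0, hxw0⟩ := exists_hyp hd3 hx hc
      obtain ⟨w1, hw1, hyw1⟩ := exists_hyp hd3 hy hyc
      by_cases h1 : dotp y w0 ≠ 0
      · exact ⟨w0, hw0, by rw [hxw0]; exact one_ne_zero, h1⟩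
      by_cases h2' : dotp x w1 ≠ 0
      · exact ⟨w1, hw1, h2', by rw [hyw1]; exact one_ne_zero⟩
      push_neg at h1 h2'
      refine ⟨w0 + w1 - (dotp w0 w1) • x, ?_, ?_, ?_⟩
      · simp only [dotp_sub_left, dotp_sub_right, dotp_add_left, dotp_add_right,
          dotp_smul_left, dotp_smul_right, hw0, hw1, hc, dotp_comm w1 w0,
          dotp_comm w0 x, dotp_comm w1 x, hxw0, h2']
        ring
      · simp only [dotp_sub_right, dotp_add_right, dotp_smul_right, hxw0, h2', hc,
          mul_zero, add_zero, sub_zero]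
        exact one_ne_zero
      · simp only [dotp_sub_right, dotp_add_right, dotp_smul_right, h1, hyw1,
          dotp_comm y x, hxy0, mul_zero, zero_add, sub_zero]
        exact one_ne_zero
    obtain ⟨w, hww0, hxw, hyw⟩ := key
    have hxw2 : dotp (x - w) (x - w) ≠ 0 := by
      have hexp : dotp (x - w) (x - w) = -(2 * dotp x w) := by
        simp only [dotp_sub_left, dotp_sub_right, hc, hww0, dotp_comm w x]; ring
      rw [hexp]
      intro h
      have h' : 2 * dotp x w = 0 := by rwa [neg_eq_zero] at h
      rcases mul_eq_zero.mp h' with h'' | h''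
      · exact h2 h''
      · exact hxw h''
    have hwy2 : dotp (w - y) (w - y) ≠ 0 := by
      have hexp : dotp (w - y) (w - y) = -(2 * dotp y w) := by
        simp only [dotp_sub_left, dotp_sub_right, hyc, hww0, dotp_comm w y]; ring
      rw [hexp]
      intro h
      have h' : 2 * dotp y w = 0 := by rwa [neg_eq_zero] at h
      rcases mul_eq_zero.mp h' with h'' | h''
      · exact h2 h''
      · exact hyw h''
    refine ⟨rfl' (w - y) hwy2 * rfl' (x - w) hxw2, mul_mem (rfl'_mem _ _) (rfl'_mem _ _), ?_⟩
    show rfl' (w - y) hwy2 (rfl' (x - w) hxw2 x) = y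
    rw [rfl'_sub_apply (hc.trans hww0.symm) hxw2, rfl'_sub_apply (hww0.trans hyc.symm) hwy2]

def pr (d : ℕ) [Fact (Nat.Prime d)] (v : ZMod d) : Fin 2 → ZMod d :=
  ![(ZMod.sq_add_sq d v).choose, (ZMod.sq_add_sq d v).choose_spec.choose]

lemma pr_spec (v : ZMod d) : pr d v 0 * pr d v 0 + pr d v 1 * pr d v 1 = v := by
  have h := (ZMod.sq_add_sq d v).choose_spec.choose_spec
  simpa [pr, sq] using h

variable {m : ℕ}

def emb (h : 2 + m = n) (p : Fin 2 → ZMod d) (t : Fin m → ZMod d) : Fin n → ZMod d :=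
  fun i => Fin.append p t (Fin.cast h.symm i)

lemma emb_dotp (h : 2 + m = n) (p : Fin 2 → ZMod d) (t : Fin m → ZMod d) :
    dotp (emb h p t) (emb h p t) = (p 0 * p 0 + p 1 * p 1) + dotp t t := by
  unfold dotp emb
  rw [← Equiv.sum_comp (finCongr h)
    (fun i => Fin.append p t (Fin.cast h.symm i) * Fin.append p t (Fin.cast h.symm i))]
  simp only [finCongr_apply, Fin.cast_cast, Fin.cast_eq_self]
  rw [Fin.sum_univ_add]
  simp [Fin.sum_univ_two]

lemma emb_front (h : 2 + m = n) (p : Fin 2 → ZMod d) (t : Fin m → ZMod d) (i : Fin 2) :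
    emb h p t (Fin.cast h (Fin.castAdd m i)) = p i := by
  simp [emb]

lemma emb_back (h : 2 + m = n) (p : Fin 2 → ZMod d) (t : Fin m → ZMod d) (j : Fin m) :
    emb h p t (Fin.cast h (Fin.natAdd 2 j)) = t j := by
  simp [emb]

lemma emb_inj (h : 2 + m = n) {p p' : Fin 2 → ZMod d} {t t' : Fin m → ZMod d}
    (he : emb h p t = emb h p' t') : p = p' ∧ t = t' := by
  constructor
  · funext i
    have := congrFun he (Fin.cast h (Fin.castAdd m i))
    rwa [emb_front, emb_front] at this
  · funext j
    have := congrFun he (Fin.cast h (Fin.natAdd 2 j))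
    rwa [emb_back, emb_back] at this

lemma emb_ne_zero_of_back (h : 2 + m = n) (p : Fin 2 → ZMod d) {t : Fin m → ZMod d}
    (ht : t ≠ 0) : emb h p t ≠ 0 := by
  intro h0
  apply ht
  funext j
  have := congrFun h0 (Fin.cast h (Fin.natAdd 2 j))
  rwa [emb_back] at this

lemma sphere_card_lb (hd3 : 3 ≤ d) (hn3 : 3 ≤ n) (c : ZMod d) :
    d ^ (n - 2) ≤ Nat.card {y : Fin n → ZMod d // dotp y y = c ∧ y ≠ 0} := by
  have h : 2 + (n - 2) = n := by omega
  have hmcard : Nat.card (Fin (n - 2) → ZMod d) = d ^ (n - 2) := by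
    simp [Nat.card_fun, Nat.card_zmod]
  rw [← hmcard]
  rcases eq_or_ne c 0 with rfl | hc
  · -- c = 0
    have hm1 : 0 < n - 2 := by omega
    set tstar : Fin (n - 2) → ZMod d := Pi.single ⟨0, hm1⟩ 1 with htstar
    have htq : dotp tstar tstar = 1 := by
      simp [dotp, htstar, Pi.single_apply]
    have htne : tstar ≠ 0 := by
      intro h0
      have := congrFun h0 ⟨0, hm1⟩
      simp [htstar] at this
    have hne1 : (-1 : ZMod d) ≠ 0 := by simp
    have hprne : pr d (-1) ≠ 0 := by
      intro h0
      have hs := pr_spec (d := d) (-1)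
      rw [h0] at hs
      have : (-1 : ZMod d) = 0 := by simpa using hs.symm
      exact hne1 this
    have hp2 : (-(pr d (-1))) ≠ pr d (-1) := by
      intro h0
      apply hprne
      funext i
      have hi := congrFun h0 i
      have h2 : (2 : ZMod d) ≠ 0 := two_ne_zero' hd3
      have : (2 : ZMod d) * pr d (-1) i = 0 := by
        have h3 : -(pr d (-1) i) = pr d (-1) i := hi
        linear_combination -h3
      rcases mul_eq_zero.mp this with hh | hh
      · exact absurd hh h2
      · exact hh
    have hmem1 : dotp (emb h (-(pr d (-1))) tstar) (emb h (-(pr d (-1))) tstar) = 0 := by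
      rw [emb_dotp, htq]
      have hs := pr_spec (d := d) (-1)
      simp only [Pi.neg_apply]
      linear_combination hs
    set Φ : (Fin (n - 2) → ZMod d) → {y : Fin n → ZMod d // dotp y y = 0 ∧ y ≠ 0} :=
      fun t =>
        if ht : t = 0 then ⟨emb h (-(pr d (-1))) tstar, hmem1, emb_ne_zero_of_back h _ htne⟩
        else ⟨emb h (pr d (0 - dotp t t)) t,
          by rw [emb_dotp, pr_spec]; ring, emb_ne_zero_of_back h _ ht⟩ with hΦ
    refine Nat.card_le_card_of_injective Φ ?_
    intro t t' hEq
    by_cases ht : t = 0 <;> by_cases ht' : t' = 0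
    · rw [ht, ht']
    · exfalso
      rw [hΦ] at hEq
      simp only [dif_pos ht, dif_neg ht'] at hEq
      have he := Subtype.mk_eq_mk.mp hEq
      obtain ⟨hp, htt⟩ := emb_inj h he
      have hq : dotp t' t' = 1 := by rw [← htt, htq]
      rw [hq] at hp
      apply hp2
      have : (0 : ZMod d) - 1 = -1 := by ring
      rw [this] at hp
      exact hp
    · exfalso
      rw [hΦ] at hEq
      simp only [dif_pos ht', dif_neg ht] at hEq
      have he := Subtype.mk_eq_mk.mp hEq
      obtain ⟨hp, htt⟩ := emb_inj h he
      have hq : dotp t t = 1 := by rw [htt, htq]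
      rw [hq] at hp
      apply hp2
      have : (0 : ZMod d) - 1 = -1 := by ring
      rw [this] at hp
      exact hp.symm
    · rw [hΦ] at hEq
      simp only [dif_neg ht, dif_neg ht'] at hEq
      exact (emb_inj h (Subtype.mk_eq_mk.mp hEq)).2
  · -- c ≠ 0
    set Φ : (Fin (n - 2) → ZMod d) → {y : Fin n → ZMod d // dotp y y = c ∧ y ≠ 0} :=
      fun t => ⟨emb h (pr d (c - dotp t t)) t, by
        constructor
        · rw [emb_dotp, pr_spec]; ring
        · intro h0
          apply hc
          have hq : dotp (emb h (pr d (c - dotp t t)) t) (emb h (pr d (c - dotp t t)) t) = c := by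
            rw [emb_dotp, pr_spec]; ring
          rw [h0] at hq
          rw [← hq]
          simp [dotp]⟩ with hΦ
    refine Nat.card_le_card_of_injective Φ ?_
    intro t t' hEq
    rw [hΦ] at hEq
    exact (emb_inj h (Subtype.mk_eq_mk.mp hEq)).2

lemma dual_card (C : Submodule (ZMod d) (Fin n → ZMod d)) :
    Nat.card (dualSet (C : Set (Fin n → ZMod d))) =
      d ^ (n - Module.finrank (ZMod d) C) := by
  classical
  set κ := Module.finrank (ZMod d) C with hκ
  have : Module.Finite (ZMod d) C := Module.Finite.of_finite
  let b : Module.Basis (Fin κ) (ZMod d) C := Module.finBasis (ZMod d) C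
  set M : Matrix (Fin κ) (Fin n) (ZMod d) := Matrix.of (fun i j => (b i : Fin n → ZMod d) j)
    with hM
  have hmv : ∀ (y : Fin n → ZMod d) (i : Fin κ),
      M.mulVec y i = dotp (b i : Fin n → ZMod d) y := by
    intro y i
    simp [Matrix.mulVec, dotProduct, hM, dotp]
  have hker : dualSet (C : Set (Fin n → ZMod d)) = ↑(LinearMap.ker M.mulVecLin) := by
    ext y
    constructor
    · intro hy
      simp only [SetLike.mem_coe, LinearMap.mem_ker]
      funext i
      rw [Matrix.mulVecLin_apply, hmv]
      exact hy _ (b i).2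
    · intro hy x hx
      have h0 : ∀ i, dotp (b i : Fin n → ZMod d) y = 0 := by
        intro i
        have := congrFun (LinearMap.mem_ker.mp hy) i
        rwa [Matrix.mulVecLin_apply, hmv] at this
      have hxsum := b.sum_repr ⟨x, hx⟩
      have hxe : x = ∑ i, (b.repr ⟨x, hx⟩ i) • (b i : Fin n → ZMod d) := by
        conv_lhs => rw [show x = ((⟨x, hx⟩ : C) : Fin n → ZMod d) from rfl, ← hxsum]
        push_cast
        rfl
      rw [hxe, dotp_comm]
      rw [show dotp y _ = dFun y (∑ i, (b.repr ⟨x, hx⟩ i) • (b i : Fin n → ZMod d)) from rfl,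
        map_sum]
      refine Finset.sum_eq_zero fun i _ => ?_
      rw [map_smul]
      have hz : dFun y (b i : Fin n → ZMod d) = 0 := by
        show dotp y _ = 0
        rw [dotp_comm]; exact h0 i
      simp [hz]
  have hinj : Function.Injective M.transpose.mulVecLin := by
    rw [← LinearMap.ker_eq_bot]
    refine (Submodule.eq_bot_iff _).mpr ?_
    intro lam hlam
    have hsum : (∑ i, lam i • (b i)) = (0 : C) := by
      apply Subtype.ext
      push_cast
      funext j
      have := congrFun (LinearMap.mem_ker.mp hlam) j
      rw [Matrix.mulVecLin_apply] at this
      simpa [Matrix.mulVec, dotProduct, hM, mul_comm, Finset.sum_apply] using this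
    have hli := b.linearIndependent
    rw [Fintype.linearIndependent_iff] at hli
    funext i
    exact hli lam hsum i
  have hrankT : M.transpose.rank = κ := by
    rw [Matrix.rank, LinearMap.finrank_range_of_inj hinj]
    simp
  have hrank : Module.finrank (ZMod d) (LinearMap.range M.mulVecLin) = κ := by
    have := Matrix.rank_transpose M
    rw [hrankT] at this
    rw [show Module.finrank (ZMod d) ↥(LinearMap.range M.mulVecLin) = M.rank from rfl, ← this]
  have hkerrank : Module.finrank (ZMod d) (LinearMap.ker M.mulVecLin) = n - κ := by
    have h1 := LinearMap.finrank_range_add_finrank_ker M.mulVecLin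
    rw [hrank] at h1
    have h2 : Module.finrank (ZMod d) (Fin n → ZMod d) = n := by simp
    rw [h2] at h1
    have hκn : κ ≤ n := by
      rw [hκ]
      have := Submodule.finrank_le C
      simpa using this
    omega
  rw [hker]
  have hcoe : Nat.card ↥((LinearMap.ker M.mulVecLin : Submodule (ZMod d) (Fin n → ZMod d)) :
      Set (Fin n → ZMod d)) = Nat.card (LinearMap.ker M.mulVecLin) := rfl
  rw [hcoe]
  haveI : Fintype (LinearMap.ker M.mulVecLin) := Fintype.ofFinite _
  rw [Nat.card_eq_fintype_card]
  rw [Module.card_eq_pow_finrank (K := ZMod d), hkerrank, ZMod.card]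

instance : Finite ((Fin n → ZMod d) ≃ₗ[ZMod d] (Fin n → ZMod d)) :=
  Finite.of_injective
    (fun g => (g : (Fin n → ZMod d) → (Fin n → ZMod d))) DFunLike.coe_injective

instance : Fintype (Giso d n) := Fintype.ofFinite _

lemma giso_inv_apply (g : Giso d n) (x : Fin n → ZMod d) : (g⁻¹).1 (g.1 x) = x :=
  (g.1).symm_apply_apply x
lemma giso_apply_inv (g : Giso d n) (x : Fin n → ZMod d) : g.1 ((g⁻¹).1 x) = x :=
  (g.1).apply_symm_apply x

open Finset in
/-- The per-vector counting bound. -/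
lemma per_x (hd3 : 3 ≤ d) (hn3 : 3 ≤ n) (C : Submodule (ZMod d) (Fin n → ZMod d))
    {x : Fin n → ZMod d} (hx : x ≠ 0) :
    (univ.filter fun g : Giso d n =>
        g.1 x ∈ dualSet (C : Set (Fin n → ZMod d))).card *
      d ^ (n - 2)
      ≤ Fintype.card (Giso d n) * d ^ (n - Module.finrank (ZMod d) C) := by
  set f : Giso d n → (Fin n → ZMod d) := fun g => g.1 x with hf
  set img := (univ : Finset (Giso d n)).image f with himg
  have fiber_const : ∀ y ∈ img, ∀ z ∈ img,
      (univ.filter fun g => f g = y).card = (univ.filter fun g => f g = z).card := by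
    intro y hy z hz
    obtain ⟨gy, -, hgy⟩ := Finset.mem_image.mp hy
    obtain ⟨gz, -, hgz⟩ := Finset.mem_image.mp hz
    apply Finset.card_bij' (fun g _ => gz * gy⁻¹ * g) (fun g _ => gy * gz⁻¹ * g)
    · intro g hg
      simp only [Finset.mem_filter, Finset.mem_univ, true_and] at hg ⊢
      have hg' : g.1 x = y := hg
      have hgy' : gy.1 x = y := hgy
      show (gz * gy⁻¹ * g).1 x = z
      calc (gz * gy⁻¹ * g).1 x = gz.1 ((gy⁻¹).1 (g.1 x)) := rfl
        _ = gz.1 ((gy⁻¹).1 (gy.1 x)) := by rw [hg', hgy']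
        _ = gz.1 x := by rw [giso_inv_apply]
        _ = z := hgz
    · intro g hg
      simp only [Finset.mem_filter, Finset.mem_univ, true_and] at hg ⊢
      have hg' : g.1 x = z := hg
      have hgz' : gz.1 x = z := hgz
      show (gy * gz⁻¹ * g).1 x = y
      calc (gy * gz⁻¹ * g).1 x = gy.1 ((gz⁻¹).1 (g.1 x)) := rfl
        _ = gy.1 ((gz⁻¹).1 (gz.1 x)) := by rw [hg', hgz']
        _ = gy.1 x := by rw [giso_inv_apply]
        _ = y := hgy
    · intro g hg; group
    · intro g hg; group
  have himg_eq : ∀ y, y ∈ img ↔ (dotp y y = dotp x x ∧ y ≠ 0) := by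
    intro y
    constructor
    · intro hy
      obtain ⟨g, -, hg⟩ := Finset.mem_image.mp hy
      have hg' : g.1 x = y := hg
      constructor
      · rw [← hg']; exact giso_isom g.2 x x
      · rw [← hg']
        intro h0
        apply hx
        have := congrArg (g.1.symm) h0
        simpa using this
    · rintro ⟨h1, h2⟩
      obtain ⟨g, hgmem, hg⟩ := exists_isom hd3 hx h2 h1.symm
      exact Finset.mem_image.mpr ⟨⟨g, hgmem⟩, Finset.mem_univ _, hg⟩
  have himg_card : d ^ (n - 2) ≤ img.card := by
    have h1 := sphere_card_lb (d := d) (n := n) hd3 hn3 (dotp x x)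
    have hcard : Nat.card {y : Fin n → ZMod d // dotp y y = dotp x x ∧ y ≠ 0}
        = img.card := by
      rw [Nat.card_eq_fintype_card]
      rw [Fintype.card_subtype]
      congr 1
      ext y
      simp only [Finset.mem_filter, Finset.mem_univ, true_and]
      exact (himg_eq y).symm
    rwa [hcard] at h1
  set s := (univ.filter fun g => f g = f 1).card with hs
  have hone : f 1 ∈ img := Finset.mem_image.mpr ⟨1, Finset.mem_univ _, rfl⟩
  have hG : Fintype.card (Giso d n) = img.card * s := by
    rw [← Finset.card_univ, Finset.card_eq_sum_card_fiberwise
      (f := f) (t := img) (fun g _ => Finset.mem_image.mpr ⟨g, Finset.mem_univ _, rfl⟩)]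
    rw [Finset.sum_congr rfl (fun y hy => fiber_const y hy (f 1) hone)]
    simp [mul_comm, hs]
  have hA : (univ.filter fun g : Giso d n =>
      g.1 x ∈ dualSet (C : Set (Fin n → ZMod d))).card
      = (img.filter fun y => y ∈ dualSet (C : Set (Fin n → ZMod d))).card * s := by
    rw [Finset.card_eq_sum_card_fiberwise (f := f)
      (t := img.filter fun y => y ∈ dualSet (C : Set (Fin n → ZMod d)))
      (fun g hg => by
        simp only [Finset.mem_coe, Finset.mem_filter, Finset.mem_univ, true_and] at hg ⊢
        exact ⟨Finset.mem_image.mpr ⟨g, Finset.mem_univ _, rfl⟩, hg⟩)]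
    rw [Finset.sum_congr rfl (fun y hy => by
      have hy' := (Finset.mem_filter.mp hy).1
      have h1 : ((univ.filter fun g : Giso d n =>
          g.1 x ∈ dualSet (C : Set (Fin n → ZMod d))).filter
          fun g => f g = y).card = (univ.filter fun g => f g = y).card := by
        congr 1
        ext g
        simp only [Finset.mem_filter, Finset.mem_univ, true_and]
        constructor
        · exact fun h => h.2
        · intro h
          refine ⟨?_, h⟩
          have h' : g.1 x = y := h
          rw [h']
          exact (Finset.mem_filter.mp hy).2
      rw [h1, fiber_const y hy' (f 1) hone])]
    simp [mul_comm, hs]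
  have hDsub : (img.filter fun y => y ∈ dualSet (C : Set (Fin n → ZMod d))).card
      ≤ d ^ (n - Module.finrank (ZMod d) C) := by
    rw [← dual_card C]
    have h2 : (img.filter fun y => y ∈ dualSet (C : Set (Fin n → ZMod d))).card
        ≤ (univ.filter fun y => y ∈ dualSet (C : Set (Fin n → ZMod d))).card :=
      Finset.card_le_card (fun y hy => Finset.mem_filter.mpr
        ⟨Finset.mem_univ _, (Finset.mem_filter.mp hy).2⟩)
    refine h2.trans ?_
    rw [Nat.card_eq_fintype_card, Fintype.card_subtype]
  calc (univ.filter fun g : Giso d n =>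
      g.1 x ∈ dualSet (C : Set (Fin n → ZMod d))).card * d ^ (n - 2)
      ≤ (univ.filter fun g : Giso d n =>
        g.1 x ∈ dualSet (C : Set (Fin n → ZMod d))).card * img.card :=
        Nat.mul_le_mul_left _ himg_card
    _ = ((img.filter fun y => y ∈ dualSet (C : Set (Fin n → ZMod d))).card * s) * img.card := by
        rw [hA]
    _ ≤ (d ^ (n - Module.finrank (ZMod d) C) * s) * img.card :=
        Nat.mul_le_mul_right _ (Nat.mul_le_mul_right _ hDsub)
    _ = Fintype.card (Giso d n) * d ^ (n - Module.finrank (ZMod d) C) := by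
        rw [hG]; ring

open Finset

lemma map_mem_Aset {κ : ℕ} (g : Giso d n) {C : Submodule (ZMod d) (Fin n → ZMod d)}
    (hC : C ∈ Aset d n κ) :
    Submodule.map (g.1 : (Fin n → ZMod d) →ₗ[ZMod d] (Fin n → ZMod d)) C ∈ Aset d n κ := by
  constructor
  · rintro x ⟨c, hc, rfl⟩ z ⟨c', hc', rfl⟩
    have := giso_isom g.2 c' c
    show dotp (g.1 c') (g.1 c) = 0
    rw [this]
    exact hC.1 hc c' hc' 
  · rw [LinearEquiv.finrank_map_eq]
    exact hC.2

lemma mem_dual_map (g : Giso d n) (C : Submodule (ZMod d) (Fin n → ZMod d))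
    (x : Fin n → ZMod d) :
    x ∈ dualSet ((Submodule.map (g.1 : (Fin n → ZMod d) →ₗ[ZMod d] (Fin n → ZMod d)) C :
      Submodule (ZMod d) (Fin n → ZMod d)) : Set (Fin n → ZMod d))
      ↔ (g⁻¹).1 x ∈ dualSet (C : Set (Fin n → ZMod d)) := by
  have key : ∀ c, dotp (g.1 c) x = dotp c ((g⁻¹).1 x) := by
    intro c
    have h1 : dotp (g.1 c) (g.1 ((g⁻¹).1 x)) = dotp c ((g⁻¹).1 x) := giso_isom g.2 _ _
    rw [giso_apply_inv] at h1
    exact h1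
  constructor
  · intro h c hc
    rw [← key c]
    exact h _ ⟨c, hc, rfl⟩
  · rintro h z ⟨c, hc, rfl⟩
    show dotp (g.1 c) x = 0
    rw [key c]
    exact h c hc

lemma count_inv_eq (C : Submodule (ZMod d) (Fin n → ZMod d)) (x : Fin n → ZMod d) :
    (univ.filter fun g : Giso d n => x ∈ dualSet
      ((Submodule.map (g.1 : (Fin n → ZMod d) →ₗ[ZMod d] (Fin n → ZMod d)) C :
        Submodule (ZMod d) (Fin n → ZMod d)) : Set (Fin n → ZMod d))).card
    = (univ.filter fun g : Giso d n =>
        g.1 x ∈ dualSet (C : Set (Fin n → ZMod d))).card := by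
  apply Finset.card_bij' (fun g _ => g⁻¹) (fun g _ => g⁻¹)
  · intro g _; simp
  · intro g _; simp
  · intro g hg
    simp only [mem_filter, mem_univ, true_and] at hg ⊢
    exact (mem_dual_map g C x).mp hg
  · intro g hg
    simp only [mem_filter, mem_univ, true_and] at hg ⊢
    refine (mem_dual_map g⁻¹ C x).mpr ?_
    rw [inv_inv]
    exact hg

lemma per_x_e (hd3 : 3 ≤ d) (hn : d ≤ n) {κ : ℕ} (hκn : 2 * κ ≤ n)
    (C : Submodule (ZMod d) (Fin n → ZMod d)) (hCr : Module.finrank (ZMod d) C = κ)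
    {x : Fin n → ZMod d} (hx : x ≠ 0) :
    (univ.filter fun g : Giso d n =>
        g.1 x ∈ dualSet (C : Set (Fin n → ZMod d))).card * d ^ (κ - (d - 1))
      ≤ Fintype.card (Giso d n) := by
  set A := (univ.filter fun g : Giso d n =>
      g.1 x ∈ dualSet (C : Set (Fin n → ZMod d))).card with hA
  by_cases hcase : d - 1 ≤ κ
  · have h1 := per_x hd3 (le_trans hd3 hn) C hx
    rw [hCr] at h1
    have hd1 : 1 ≤ d := by omega
    have hdpos : 0 < d ^ (n - κ) := Nat.pow_pos (by omega)
    refine Nat.le_of_mul_le_mul_right ?_ hdpos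
    have hexp : (κ - (d - 1)) + (n - κ) = n - (d - 1) := by omega
    calc A * d ^ (κ - (d - 1)) * d ^ (n - κ)
        = A * d ^ ((κ - (d - 1)) + (n - κ)) := by rw [mul_assoc, pow_add]
      _ = A * d ^ (n - (d - 1)) := by rw [hexp]
      _ ≤ A * d ^ (n - 2) := Nat.mul_le_mul_left _ (Nat.pow_le_pow_right (by omega) (by omega))
      _ ≤ Fintype.card (Giso d n) * d ^ (n - κ) := h1
  · have he : κ - (d - 1) = 0 := by omega
    rw [he, pow_zero, mul_one, hA]
    exact le_trans (Finset.card_filter_le _ _) (le_of_eq Finset.card_univ)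

lemma per_Q (hd3 : 3 ≤ d) (hn : d ≤ n) {κ : ℕ} (hκn : 2 * κ ≤ n)
    (C : Submodule (ZMod d) (Fin n → ZMod d)) (hCr : Module.finrank (ZMod d) C = κ)
    {Q : ZMod d → ℝ} (hQ : Q ≠ typeOf (0 : Fin n → ZMod d)) :
    (∑ g : Giso d n, (univ.filter fun x : Fin n → ZMod d => typeOf x = Q ∧ x ∈ dualSet
      ((Submodule.map (g.1 : (Fin n → ZMod d) →ₗ[ZMod d] (Fin n → ZMod d)) C :
        Submodule (ZMod d) (Fin n → ZMod d)) : Set (Fin n → ZMod d))).card) * d ^ (κ - (d - 1))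
      ≤ Fintype.card (Giso d n) * (univ.filter fun x : Fin n → ZMod d => typeOf x = Q).card := by
  have hswap : ∑ g : Giso d n, (univ.filter fun x : Fin n → ZMod d => typeOf x = Q ∧ x ∈ dualSet
      ((Submodule.map (g.1 : (Fin n → ZMod d) →ₗ[ZMod d] (Fin n → ZMod d)) C :
        Submodule (ZMod d) (Fin n → ZMod d)) : Set (Fin n → ZMod d))).card
      = ∑ x ∈ (univ.filter fun x : Fin n → ZMod d => typeOf x = Q),
          (univ.filter fun g : Giso d n =>
            g.1 x ∈ dualSet (C : Set (Fin n → ZMod d))).card := by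
    have h1 : ∀ g : Giso d n, (univ.filter fun x : Fin n → ZMod d =>
        typeOf x = Q ∧ x ∈ dualSet
        ((Submodule.map (g.1 : (Fin n → ZMod d) →ₗ[ZMod d] (Fin n → ZMod d)) C :
          Submodule (ZMod d) (Fin n → ZMod d)) : Set (Fin n → ZMod d))).card
        = ∑ x ∈ (univ.filter fun x : Fin n → ZMod d => typeOf x = Q),
            if x ∈ dualSet ((Submodule.map
              (g.1 : (Fin n → ZMod d) →ₗ[ZMod d] (Fin n → ZMod d)) C :
              Submodule (ZMod d) (Fin n → ZMod d)) : Set (Fin n → ZMod d)) then 1 else 0 := by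
      intro g
      rw [← Finset.filter_filter, Finset.card_filter]
    rw [Finset.sum_congr rfl fun g _ => h1 g, Finset.sum_comm]
    refine Finset.sum_congr rfl fun x _ => ?_
    rw [← Finset.card_filter]
    exact count_inv_eq C x
  rw [hswap, Finset.sum_mul]
  calc ∑ x ∈ (univ.filter fun x : Fin n → ZMod d => typeOf x = Q),
        (univ.filter fun g : Giso d n =>
          g.1 x ∈ dualSet (C : Set (Fin n → ZMod d))).card * d ^ (κ - (d - 1))
      ≤ ∑ _x ∈ (univ.filter fun x : Fin n → ZMod d => typeOf x = Q),
          Fintype.card (Giso d n) := by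
        refine Finset.sum_le_sum fun x hx => ?_
        have hxQ : typeOf x = Q := (Finset.mem_filter.mp hx).2
        have hxne : x ≠ 0 := by
          intro h0
          apply hQ
          rw [← hxQ, h0]
        exact per_x_e hd3 hn hκn C hCr hxne
    _ = Fintype.card (Giso d n) * (univ.filter fun x : Fin n → ZMod d => typeOf x = Q).card := by
        rw [Finset.sum_const, smul_eq_mul, mul_comm]


lemma nat_pigeonhole_aux {P G : ℕ} (hP : 1 ≤ P) (hG : 1 ≤ G)
    (h : G * P ≤ (P - 1) * (G - 1)) : False := by
  obtain ⟨p, hp⟩ := Nat.exists_eq_add_of_le hP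
  obtain ⟨q, hq⟩ := Nat.exists_eq_add_of_le hG
  rw [hp, hq, Nat.add_sub_cancel_left, Nat.add_sub_cancel_left] at h
  have hx : (1 + q) * (1 + p) = 1 + q + p + q * p := by ring
  have hy : p * q = q * p := by ring
  linarith [h, hx, hy]

lemma typesSet_finite : (typesSet (ZMod d) n).Finite := by
  have h : typesSet (ZMod d) n = Set.range (typeOf (Y := ZMod d) (n := n)) := by
    ext Q
    simp only [typesSet, Set.mem_setOf_eq, Set.mem_range]
    exact exists_congr fun y => eq_comm
  rw [h]
  exact Set.finite_range _

lemma exists_good (hd3 : 3 ≤ d) (hn : d ≤ n) {κ : ℕ} (hκn : 2 * κ ≤ n)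
    (C : Submodule (ZMod d) (Fin n → ZMod d)) (hCr : Module.finrank (ZMod d) C = κ) :
    ∃ g : Giso d n, ∀ Q : ZMod d → ℝ, Q ∈ typesSet (ZMod d) n →
      Q ≠ typeOf (0 : Fin n → ZMod d) →
      (univ.filter fun x : Fin n → ZMod d => typeOf x = Q ∧ x ∈ dualSet
        ((Submodule.map (g.1 : (Fin n → ZMod d) →ₗ[ZMod d] (Fin n → ZMod d)) C :
          Submodule (ZMod d) (Fin n → ZMod d)) : Set (Fin n → ZMod d))).card * d ^ (κ - (d - 1))
        ≤ (typesSet (ZMod d) n).ncard *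
            (univ.filter fun x : Fin n → ZMod d => typeOf x = Q).card := by
  set e := κ - (d - 1) with he
  set P := (typesSet (ZMod d) n).ncard with hP
  have hfin := typesSet_finite (d := d) (n := n)
  have hPcard : P = hfin.toFinset.card := by
    rw [hP, Set.ncard_eq_toFinset_card _ hfin]
  set Q₀ := typeOf (0 : Fin n → ZMod d) with hQ₀
  have hQ₀mem : Q₀ ∈ hfin.toFinset := by
    rw [Set.Finite.mem_toFinset]
    exact ⟨0, rfl⟩
  have hP1 : 1 ≤ P := by
    rw [hPcard]
    exact Finset.card_pos.mpr ⟨Q₀, hQ₀mem⟩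
  have hG1 : 1 ≤ Fintype.card (Giso d n) := Fintype.card_pos_iff.mpr ⟨1⟩
  set G := Fintype.card (Giso d n) with hG
  by_contra hcon
  push_neg at hcon
  -- each g is bad for some Q
  set Bad : (ZMod d → ℝ) → Finset (Giso d n) := fun Q =>
    univ.filter fun g => P * (univ.filter fun x : Fin n → ZMod d => typeOf x = Q).card
      < (univ.filter fun x : Fin n → ZMod d => typeOf x = Q ∧ x ∈ dualSet
        ((Submodule.map (g.1 : (Fin n → ZMod d) →ₗ[ZMod d] (Fin n → ZMod d)) C :
          Submodule (ZMod d) (Fin n → ZMod d)) : Set (Fin n → ZMod d))).card * d ^ e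
    with hBad
  have hcover : (univ : Finset (Giso d n)) ⊆
      (hfin.toFinset.erase Q₀).biUnion Bad := by
    intro g _
    obtain ⟨Q, hQmem, hQne, hQbad⟩ := hcon g
    refine Finset.mem_biUnion.mpr ⟨Q, ?_, ?_⟩
    · exact Finset.mem_erase.mpr ⟨hQne, (Set.Finite.mem_toFinset _).mpr hQmem⟩
    · rw [hBad]
      exact Finset.mem_filter.mpr ⟨Finset.mem_univ _, hQbad⟩
  have hsum : G ≤ ∑ Q ∈ hfin.toFinset.erase Q₀, (Bad Q).card := by
    calc G = (univ : Finset (Giso d n)).card := (Finset.card_univ).symm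
      _ ≤ ((hfin.toFinset.erase Q₀).biUnion Bad).card := Finset.card_le_card hcover
      _ ≤ ∑ Q ∈ hfin.toFinset.erase Q₀, (Bad Q).card := Finset.card_biUnion_le
  -- bound each Bad Q
  have hBadBound : ∀ Q ∈ hfin.toFinset.erase Q₀, (Bad Q).card * P ≤ G - 1 := by
    intro Q hQ
    obtain ⟨hQne, hQmem⟩ := Finset.mem_erase.mp hQ
    obtain ⟨y, hy⟩ := (Set.Finite.mem_toFinset _).mp hQmem
    set T := (univ.filter fun x : Fin n → ZMod d => typeOf x = Q).card with hT
    have hT1 : 1 ≤ T := by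
      rw [hT]
      exact Finset.card_pos.mpr ⟨y, Finset.mem_filter.mpr ⟨Finset.mem_univ _, hy.symm⟩⟩
    have hMark : (Bad Q).card * (P * T + 1) ≤ G * T := by
      have h1 : (Bad Q).card * (P * T + 1) ≤
          ∑ g ∈ Bad Q, (univ.filter fun x : Fin n → ZMod d => typeOf x = Q ∧ x ∈ dualSet
            ((Submodule.map (g.1 : (Fin n → ZMod d) →ₗ[ZMod d] (Fin n → ZMod d)) C :
              Submodule (ZMod d) (Fin n → ZMod d)) : Set (Fin n → ZMod d))).card * d ^ e := by
        have := Finset.card_nsmul_le_sum (Bad Q)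
          (fun g => (univ.filter fun x : Fin n → ZMod d => typeOf x = Q ∧ x ∈ dualSet
            ((Submodule.map (g.1 : (Fin n → ZMod d) →ₗ[ZMod d] (Fin n → ZMod d)) C :
              Submodule (ZMod d) (Fin n → ZMod d)) : Set (Fin n → ZMod d))).card * d ^ e)
          (P * T + 1)
          (fun g hg => by
            have h := (Finset.mem_filter.mp hg).2
            rw [← hT] at h
            simpa using Nat.succ_le_of_lt h)
        simpa [smul_eq_mul] using this
      refine h1.trans ?_
      have h2 : ∑ g ∈ Bad Q, (univ.filter fun x : Fin n → ZMod d => typeOf x = Q ∧ x ∈ dualSet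
          ((Submodule.map (g.1 : (Fin n → ZMod d) →ₗ[ZMod d] (Fin n → ZMod d)) C :
            Submodule (ZMod d) (Fin n → ZMod d)) : Set (Fin n → ZMod d))).card * d ^ e
          ≤ ∑ g : Giso d n, (univ.filter fun x : Fin n → ZMod d => typeOf x = Q ∧ x ∈ dualSet
          ((Submodule.map (g.1 : (Fin n → ZMod d) →ₗ[ZMod d] (Fin n → ZMod d)) C :
            Submodule (ZMod d) (Fin n → ZMod d)) : Set (Fin n → ZMod d))).card * d ^ e :=
        Finset.sum_le_sum_of_subset (Finset.subset_univ _)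
      refine h2.trans ?_
      rw [← Finset.sum_mul]
      exact per_Q hd3 hn hκn C hCr hQne
    -- derive (Bad Q).card * P ≤ G - 1
    by_contra hcontra
    push_neg at hcontra
    have hGP : G ≤ (Bad Q).card * P := by omega
    have h3 : G * T ≤ (Bad Q).card * (P * T) := by
      calc G * T ≤ ((Bad Q).card * P) * T := Nat.mul_le_mul_right _ hGP
        _ = (Bad Q).card * (P * T) := by ring
    have h4 : (Bad Q).card * (P * T) + (Bad Q).card ≤ (Bad Q).card * (P * T) := by
      calc (Bad Q).card * (P * T) + (Bad Q).card = (Bad Q).card * (P * T + 1) := by ring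
        _ ≤ G * T := hMark
        _ ≤ (Bad Q).card * (P * T) := h3
    have hBc : (Bad Q).card = 0 := by omega
    rw [hBc] at hGP
    simp at hGP
    omega
  -- combine
  have hfinal : G * P ≤ (P - 1) * (G - 1) := by
    calc G * P ≤ (∑ Q ∈ hfin.toFinset.erase Q₀, (Bad Q).card) * P :=
          Nat.mul_le_mul_right _ hsum
      _ = ∑ Q ∈ hfin.toFinset.erase Q₀, (Bad Q).card * P := by rw [Finset.sum_mul]
      _ ≤ ∑ _Q ∈ hfin.toFinset.erase Q₀, (G - 1) := Finset.sum_le_sum hBadBound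
      _ = (hfin.toFinset.erase Q₀).card * (G - 1) := by rw [Finset.sum_const, smul_eq_mul]
      _ = (P - 1) * (G - 1) := by
          rw [Finset.card_erase_of_mem hQ₀mem, hPcard]
  exact nat_pigeonhole_aux hP1 hG1 hfinal

end S7

open S7 in
theorem stmt_7 (d : ℕ) [NeZero d] (hd : d.Prime) (hd3 : 3 ≤ d) (n κ : ℕ)
    (hn : d ≤ n) (hκ : 2 * κ ≤ n) (hA : (Aset d n κ).Nonempty) :
    ∃ C ∈ Aset d n κ, ∀ Q ∈ typesSet (ZMod d) n,
      Q ≠ typeOf (0 : Fin n → ZMod d) →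
      (Ncount Q (dualSet (C : Set (Fin n → ZMod d))) : ℝ) ≤
        ((typesSet (ZMod d) n).ncard : ℝ) * ((typeClass n Q).ncard : ℝ) *
          (d : ℝ) ^ (-(κ : ℝ) + (d : ℝ) - 1) := by
  classical
  haveI : Fact (Nat.Prime d) := ⟨hd⟩
  obtain ⟨C₀, hC₀⟩ := hA
  obtain ⟨g, hg⟩ := exists_good hd3 hn hκ C₀ hC₀.2
  refine ⟨Submodule.map (g.1 : (Fin n → ZMod d) →ₗ[ZMod d] (Fin n → ZMod d)) C₀,
    map_mem_Aset g hC₀, ?_⟩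
  intro Q hQ hQne
  have key := hg Q hQ hQne
  -- identify the natural-number count
  set S := dualSet ((Submodule.map (g.1 : (Fin n → ZMod d) →ₗ[ZMod d] (Fin n → ZMod d)) C₀ :
    Submodule (ZMod d) (Fin n → ZMod d)) : Set (Fin n → ZMod d)) with hS
  have hNc : Ncount Q S =
      (Finset.univ.filter fun x : Fin n → ZMod d => typeOf x = Q ∧ x ∈ S).card := by
    rw [Ncount]
    rw [show {x ∈ S | typeOf x = Q} =
      ((Finset.univ.filter fun x : Fin n → ZMod d => typeOf x = Q ∧ x ∈ S) :
        Finset (Fin n → ZMod d)) from by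
      ext x
      simp [and_comm]]
    rw [Set.ncard_coe_finset]
  have hTc : (typeClass n Q).ncard =
      (Finset.univ.filter fun x : Fin n → ZMod d => typeOf x = Q).card := by
    rw [show typeClass n Q =
      ((Finset.univ.filter fun x : Fin n → ZMod d => typeOf x = Q) :
        Finset (Fin n → ZMod d)) from by
      ext x
      simp [typeClass]]
    rw [Set.ncard_coe_finset]
  set N := Ncount Q S with hN
  set P := (typesSet (ZMod d) n).ncard with hP
  set T := (Finset.univ.filter fun x : Fin n → ZMod d => typeOf x = Q).card with hT
  have keyN : N * d ^ (κ - (d - 1)) ≤ P * T := by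
    rw [hNc]
    exact key
  -- now the real-number estimate
  set e := κ - (d - 1) with he
  have hd0 : (0 : ℝ) < (d : ℝ) := by positivity
  have hde : (0 : ℝ) < (d : ℝ) ^ e := by positivity
  have h1 : (N : ℝ) * (d : ℝ) ^ e ≤ (P : ℝ) * (T : ℝ) := by
    have := keyN
    push_cast
    exact_mod_cast this
  have h2 : (N : ℝ) ≤ (P : ℝ) * (T : ℝ) * ((d : ℝ) ^ e)⁻¹ := by
    rw [← div_eq_mul_inv, le_div_iff₀ hde]
    exact h1
  have h3 : ((d : ℝ) ^ e)⁻¹ = (d : ℝ) ^ (-(e : ℝ)) := by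
    rw [← Real.rpow_natCast d e, ← Real.rpow_neg (le_of_lt hd0)]
  have hre : -(e : ℝ) ≤ -(κ : ℝ) + (d : ℝ) - 1 := by
    rcases le_or_gt (d - 1) κ with hcase | hcase
    · have he' : (e : ℝ) = (κ : ℝ) - ((d : ℝ) - 1) := by
        rw [he]
        push_cast [Nat.cast_sub hcase, Nat.cast_sub (show 1 ≤ d by omega)]
        ring
      rw [he']
      ring_nf
      linarith
    · have he' : e = 0 := by omega
      rw [he']
      have hκd : (κ : ℝ) ≤ (d : ℝ) - 1 := by
        have : κ + 1 ≤ d := by omega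
        have := (Nat.cast_le (α := ℝ)).mpr this
        push_cast at this
        linarith
      simp
      linarith
  have h4 : (d : ℝ) ^ (-(e : ℝ)) ≤ (d : ℝ) ^ (-(κ : ℝ) + (d : ℝ) - 1) := by
    apply Real.rpow_le_rpow_of_exponent_le _ hre
    exact_mod_cast (show 1 ≤ d by omega)
  calc (N : ℝ) ≤ (P : ℝ) * (T : ℝ) * ((d : ℝ) ^ e)⁻¹ := h2
    _ = (P : ℝ) * (T : ℝ) * (d : ℝ) ^ (-(e : ℝ)) := by rw [h3]
    _ ≤ (P : ℝ) * (T : ℝ) * (d : ℝ) ^ (-(κ : ℝ) + (d : ℝ) - 1) := by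
        apply mul_le_mul_of_nonneg_left h4
        exact mul_nonneg (Nat.cast_nonneg P) (Nat.cast_nonneg T)
    _ = ((typesSet (ZMod d) n).ncard : ℝ) * ((typeClass n Q).ncard : ℝ) *
          (d : ℝ) ^ (-(κ : ℝ) + (d : ℝ) - 1) := by
        rw [hTc]

end
end

section
/- Let d ≥ 3 be a prime, F = ℤ/dℤ, and let C ⊆ F^n be a self-orthogonal linear subspace with dim_F C = κ satisfying: for every type Q ∈ P_n(F) with Q ≠ P_{0^n}, |{x ∈ C^⊥ : P_x = Q}| ≤ |P_n(F)|·|T_Q^n|·d^{−κ+d−1}. Let the symmetric group S_n act on F^n by permuting coordinates, and for y ∈ F^n let A_y(C) = {π ∈ S_n : y ∈ π(C)^⊥}. Then for every y ∈ F^n with y ≠ 0^n, |A_y(C)| ≤ |P_n(F)|·d^{−κ+d−1}·n!. -/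
/- STATEMENT 9 (Lemma on the permuted ensemble): if C is self-orthogonal of dimension κ
   with balanced type spectrum, then for every y ≠ 0ⁿ,
   |{π ∈ S_n : y ∈ π(C)^⊥}| ≤ |P_n(F)|·d^{−κ+d−1}·n!. -/

open scoped BigOperators

noncomputable section

/-- Action of a permutation on a string: `(π·x)ᵢ = x_{π(i)}`. -/
def permVec {d n : ℕ} (π : Equiv.Perm (Fin n)) (x : Fin n → ZMod d) : Fin n → ZMod d :=
  fun i => x (π i)

/-- `A_y(C) = {π ∈ S_n : y ∈ π(C)^⊥}`. -/
def ApermSet {d n : ℕ} (C : Submodule (ZMod d) (Fin n → ZMod d)) (y : Fin n → ZMod d) :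
    Set (Equiv.Perm (Fin n)) :=
  {π | y ∈ dualSet (permVec π '' (C : Set (Fin n → ZMod d)))}


open Classical in
lemma typeOf_comp' {Y : Type*} [Fintype Y] {n : ℕ} (y : Fin n → Y) (π : Equiv.Perm (Fin n)) :
    typeOf (y ∘ π) = typeOf y := by
  funext a
  unfold typeOf
  congr 1
  norm_cast
  apply Finset.card_bij (fun i _ => π i)
  · intro i hi; simp_all
  · intro i _ j _ h; exact π.injective h
  · intro j hj; exact ⟨π⁻¹ j, by simp_all, by simp⟩

open Classical in
lemma count_eq_of_typeOf_eq' {Y : Type*} [Fintype Y] {n : ℕ} {y z : Fin n → Y}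
    (h : typeOf y = typeOf z) (a : Y) :
    (Finset.univ.filter fun i => y i = a).card = (Finset.univ.filter fun i => z i = a).card := by
  rcases Nat.eq_zero_or_pos n with hn | hn
  · subst hn; simp
  · have h2 := congrFun h a
    unfold typeOf at h2
    have hn' : (n : ℝ) ≠ 0 := by positivity
    field_simp at h2
    exact_mod_cast h2

open Classical in
lemma exists_perm_of_typeOf_eq' {Y : Type*} [Fintype Y] {n : ℕ} {y z : Fin n → Y}
    (h : typeOf y = typeOf z) : ∃ π : Equiv.Perm (Fin n), y ∘ π = z := by
  have hcard : ∀ a : Y, Fintype.card {i // z i = a} = Fintype.card {i // y i = a} := by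
    intro a
    rw [Fintype.card_subtype, Fintype.card_subtype]
    exact (count_eq_of_typeOf_eq' h a).symm
  refine ⟨Equiv.ofFiberEquiv (f := z) (g := y) (fun a => Fintype.equivOfCardEq (hcard a)), ?_⟩
  funext i
  exact Equiv.ofFiberEquiv_map (fun a => Fintype.equivOfCardEq (hcard a)) i

/-- If `y` has the same type as the all-zero string, then `y = 0`. -/
lemma eq_zero_of_typeOf_eq_zero {Y : Type*} [Fintype Y] [Zero Y] {n : ℕ}
    {y : Fin n → Y} (h : typeOf y = typeOf (0 : Fin n → Y)) : y = 0 := by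
  classical
  have hcnt := count_eq_of_typeOf_eq' h (0 : Y)
  have huniv : (Finset.univ.filter fun i : Fin n => y i = 0)
      = (Finset.univ : Finset (Fin n)) := by
    apply Finset.eq_univ_of_card
    rw [hcnt]
    have : (Finset.univ.filter fun i : Fin n => (0 : Fin n → Y) i = 0)
        = (Finset.univ : Finset (Fin n)) := by
      apply Finset.eq_univ_iff_forall.mpr
      intro i
      simp only [Finset.mem_filter, Finset.mem_univ, true_and, Pi.zero_apply]
    rw [this, Finset.card_univ]
  funext i
  have hi : i ∈ Finset.univ.filter fun i : Fin n => y i = 0 := by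
    rw [huniv]; exact Finset.mem_univ i
  exact (Finset.mem_filter.mp hi).2

open Classical in
lemma fiber_card_eq' {Y : Type*} [Fintype Y] {n : ℕ} (y z : Fin n → Y)
    (hz : typeOf z = typeOf y) :
    (Finset.univ.filter fun π : Equiv.Perm (Fin n) => y ∘ π = z).card
      = (Finset.univ.filter fun π : Equiv.Perm (Fin n) => y ∘ π = y).card := by
  obtain ⟨π₀, hπ₀⟩ := exists_perm_of_typeOf_eq' hz.symm
  apply Finset.card_bij' (fun π _ => π * π₀⁻¹) (fun σ _ => σ * π₀)
  · intro π hπ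
    simp only [Finset.mem_filter, Finset.mem_univ, true_and] at hπ ⊢
    funext i
    have h1 := congrFun hπ (π₀⁻¹ i)
    have h2 := congrFun hπ₀ (π₀⁻¹ i)
    simp only [Function.comp_apply, Equiv.Perm.coe_mul, Equiv.Perm.inv_def, Equiv.apply_symm_apply] at *
    rw [h1, ← h2]
  · intro σ hσ
    simp only [Finset.mem_filter, Finset.mem_univ, true_and] at hσ ⊢
    funext i
    have h1 := congrFun hσ (π₀ i)
    have h2 := congrFun hπ₀ i
    simp only [Function.comp_apply, Equiv.Perm.coe_mul] at *
    rw [h1, h2]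
  · intro π _; simp
  · intro σ _; simp

lemma ncard_setOf' {α : Type*} [Fintype α] (p : α → Prop) [DecidablePred p] :
    {x | p x}.ncard = (Finset.univ.filter p).card := by
  simp [Set.ncard_eq_toFinset_card', Set.toFinset_setOf]

/-- The key double-counting identity, stated purely at the level of `ncard`. -/
lemma main_count {Y : Type*} [Fintype Y] {n : ℕ} (y : Fin n → Y) (D : Set (Fin n → Y)) :
    {π : Equiv.Perm (Fin n) | (y ∘ ⇑π) ∈ D}.ncard * (typeClass n (typeOf y)).ncard
      = Ncount (typeOf y) D * n.factorial := by
  classical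
  have e1 : {π : Equiv.Perm (Fin n) | (y ∘ ⇑π) ∈ D}.ncard
      = (Finset.univ.filter fun π : Equiv.Perm (Fin n) => (y ∘ π) ∈ D).card :=
    ncard_setOf' _
  have e2 : (typeClass n (typeOf y)).ncard
      = (Finset.univ.filter fun z : Fin n → Y => typeOf z = typeOf y).card :=
    ncard_setOf' _
  have e3 : Ncount (typeOf y) D
      = (Finset.univ.filter fun z : Fin n → Y => z ∈ D ∧ typeOf z = typeOf y).card :=
    ncard_setOf' _
  rw [e1, e2, e3]
  set c := (Finset.univ.filter fun π : Equiv.Perm (Fin n) => y ∘ π = y).card with hc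
  have step2 : (Finset.univ.filter fun π : Equiv.Perm (Fin n) => (y ∘ π) ∈ D).card
      = (Finset.univ.filter fun z : Fin n → Y => z ∈ D ∧ typeOf z = typeOf y).card * c := by
    rw [Finset.card_eq_sum_card_fiberwise
      (f := fun π : Equiv.Perm (Fin n) => y ∘ π)
      (t := Finset.univ.filter fun z : Fin n → Y => z ∈ D ∧ typeOf z = typeOf y)
      (fun π hπ => by
        simp only [Finset.mem_coe, Finset.mem_filter, Finset.mem_univ, true_and] at hπ ⊢
        exact ⟨hπ, typeOf_comp' y π⟩)]
    rw [Finset.sum_congr rfl (fun b hb => ?_), Finset.sum_const, smul_eq_mul]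
    simp only [Finset.mem_filter, Finset.mem_univ, true_and] at hb
    rw [Finset.filter_filter]
    rw [show (Finset.univ.filter fun a : Equiv.Perm (Fin n) => (y ∘ a) ∈ D ∧ y ∘ a = b)
        = Finset.univ.filter fun a : Equiv.Perm (Fin n) => y ∘ a = b from
      Finset.filter_congr fun a _ => by
        constructor
        · exact fun h => h.2
        · exact fun h => ⟨h ▸ hb.1, h⟩]
    exact fiber_card_eq' y b hb.2
  have step3 : n.factorial
      = (Finset.univ.filter fun z : Fin n → Y => typeOf z = typeOf y).card * c := by
    have h0 : (Finset.univ : Finset (Equiv.Perm (Fin n))).card = n.factorial := by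
      simp [Finset.card_univ, Fintype.card_perm]
    rw [← h0, Finset.card_eq_sum_card_fiberwise
      (f := fun π : Equiv.Perm (Fin n) => y ∘ π)
      (t := Finset.univ.filter fun z : Fin n → Y => typeOf z = typeOf y)
      (fun π _ => by
        simp only [Finset.mem_coe, Finset.mem_filter, Finset.mem_univ, true_and]
        exact typeOf_comp' y π)]
    rw [Finset.sum_congr rfl (fun b hb => ?_), Finset.sum_const, smul_eq_mul]
    simp only [Finset.mem_filter, Finset.mem_univ, true_and] at hb
    exact fiber_card_eq' y b hb
  rw [step2, step3]
  ring

lemma dotp_perm' {d n : ℕ} (π : Equiv.Perm (Fin n)) (x y : Fin n → ZMod d) :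
    dotp (permVec π x) y = dotp x (y ∘ ⇑π⁻¹) := by
  unfold dotp permVec
  rw [← Equiv.sum_comp π (fun j => x j * (y ∘ ⇑π⁻¹) j)]
  simp

lemma mem_dual_perm' {d n : ℕ} (π : Equiv.Perm (Fin n)) (S : Set (Fin n → ZMod d))
    (y : Fin n → ZMod d) :
    y ∈ dualSet (permVec π '' S) ↔ (y ∘ ⇑π⁻¹) ∈ dualSet S := by
  constructor
  · intro h x hx
    rw [← dotp_perm']
    exact h _ ⟨x, hx, rfl⟩
  · rintro h x' ⟨x, hx, rfl⟩
    rw [dotp_perm']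
    exact h x hx

set_option maxHeartbeats 1000000 in
theorem stmt_9 (d : ℕ) [NeZero d] (hd : d.Prime) (hd3 : 3 ≤ d) (n κ : ℕ)
    (C : Submodule (ZMod d) (Fin n → ZMod d))
    (hC : (C : Set (Fin n → ZMod d)) ⊆ dualSet (C : Set (Fin n → ZMod d)))
    (hκ : Module.finrank (ZMod d) C = κ)
    (hbal : ∀ Q ∈ typesSet (ZMod d) n, Q ≠ typeOf (0 : Fin n → ZMod d) →
      (Ncount Q (dualSet (C : Set (Fin n → ZMod d))) : ℝ) ≤
        ((typesSet (ZMod d) n).ncard : ℝ) * ((typeClass n Q).ncard : ℝ) *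
          (d : ℝ) ^ (-(κ : ℝ) + (d : ℝ) - 1)) :
    ∀ y : Fin n → ZMod d, y ≠ 0 →
      ((ApermSet C y).ncard : ℝ) ≤
        ((typesSet (ZMod d) n).ncard : ℝ) * (d : ℝ) ^ (-(κ : ℝ) + (d : ℝ) - 1) *
          (Nat.factorial n : ℝ) := by
  intro y hy
  set Q := typeOf y with hQ
  set D := dualSet (C : Set (Fin n → ZMod d)) with hD
  have hQ0 : Q ≠ typeOf (0 : Fin n → ZMod d) := fun h => hy (eq_zero_of_typeOf_eq_zero h)
  have hQmem : Q ∈ typesSet (ZMod d) n := ⟨y, rfl⟩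
  -- rewrite ApermSet as an image
  have hA : ApermSet C y = (fun π : Equiv.Perm (Fin n) => π⁻¹) '' {π | (y ∘ ⇑π) ∈ D} := by
    ext σ
    simp only [ApermSet, Set.mem_setOf_eq, Set.mem_image]
    rw [mem_dual_perm']
    constructor
    · intro h
      exact ⟨σ⁻¹, by simpa using h, inv_inv σ⟩
    · rintro ⟨π, hπ, rfl⟩
      simpa using hπ
  have hAcard : (ApermSet C y).ncard = {π : Equiv.Perm (Fin n) | (y ∘ ⇑π) ∈ D}.ncard := by
    rw [hA, Set.ncard_image_of_injective _ inv_injective]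
  have hkey := main_count y D
  rw [← hQ] at hkey
  have hbalQ := hbal Q hQmem hQ0
  set P : ℝ := ((typesSet (ZMod d) n).ncard : ℝ)
  set e : ℝ := (d : ℝ) ^ (-(κ : ℝ) + (d : ℝ) - 1)
  set T : ℕ := (typeClass n Q).ncard with hT
  have hTpos : 0 < T := by
    rw [hT]
    refine (Set.ncard_pos (Set.toFinite _)).mpr ⟨y, ?_⟩
    exact hQ.symm
  have hTpos' : (0 : ℝ) < (T : ℝ) := by exact_mod_cast hTpos
  have hAT : ((ApermSet C y).ncard : ℝ) * (T : ℝ)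
      = (Ncount Q D : ℝ) * (n.factorial : ℝ) := by
    rw [hAcard]
    exact_mod_cast hkey
  have hepos : (0 : ℝ) ≤ e := Real.rpow_nonneg (by positivity) _
  apply le_of_mul_le_mul_right _ hTpos'
  calc ((ApermSet C y).ncard : ℝ) * (T : ℝ)
      = (Ncount Q D : ℝ) * (n.factorial : ℝ) := hAT
    _ ≤ P * (T : ℝ) * e * (n.factorial : ℝ) := by
        exact mul_le_mul_of_nonneg_right hbalQ (by positivity)
    _ = P * e * (n.factorial : ℝ) * (T : ℝ) := by ring

end
end

section
/- Let F = ℤ/2ℤ, let n ≥ 2 be an even integer and 0 < κ ≤ n/2 an integer. Let A = {C ⊆ F^n : C is a linear subspace, 1^n ∈ C, C ⊆ C^⊥, dim_F C = κ}, and for x ∈ F^n let A_x = {C ∈ A : x ∈ C^⊥}. Then for any two vectors x, y ∈ F^n with x·x = y·y = 0 and x, y ∉ {0^n, 1^n}, one has |A_x| = |A_y|. -/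
/-!
For a vector `v` with `v ⬝ᵥ v = 0`, the transvection `x ↦ x + (x ⬝ᵥ v) • v` is, in characteristic
two, an involutive isometry of the dot product; over `ZMod 2` it also fixes `1`, because
`1 ⬝ᵥ v = v ⬝ᵥ v`. Any isometry `g` fixing `1` maps `A_x` bijectively onto `A_{g x}` via
`C ↦ g C`. Given even-weight `x, y ∉ {0, 1}`, there is an even-weight `z` with
`x ⬝ᵥ z = y ⬝ᵥ z = 1`; then the transvection along `x + z` sends `x` to `z`, and the one along
`z + y` sends `z` to `y`.
-/

open scoped BigOperators

noncomputable section

def Aset2 (n κ : ℕ) : Set (Submodule (ZMod 2) (Fin n → ZMod 2)) :=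
  {C | (fun _ => (1 : ZMod 2)) ∈ C ∧
    (C : Set (Fin n → ZMod 2)) ⊆ dualSet (C : Set (Fin n → ZMod 2)) ∧
    Module.finrank (ZMod 2) C = κ}

def AsetX2 (n κ : ℕ) (x : Fin n → ZMod 2) : Set (Submodule (ZMod 2) (Fin n → ZMod 2)) :=
  {C ∈ Aset2 n κ | x ∈ dualSet (C : Set (Fin n → ZMod 2))}

namespace CalderbankShor

section Transvection

variable {ι R : Type*} [Fintype ι] [CommRing R]

def transvection (v : ι → R) : (ι → R) →ₗ[R] (ι → R) where
  toFun x := x + (x ⬝ᵥ v) • v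
  map_add' a b := by simp only [add_dotProduct, add_smul]; abel
  map_smul' r a := by
    simp only [smul_dotProduct, smul_eq_mul, mul_smul, smul_add, RingHom.id_apply]

@[simp]
theorem transvection_apply (v x : ι → R) : transvection v x = x + (x ⬝ᵥ v) • v := rfl

variable {v x : ι → R}

theorem transvection_of_dotProduct_eq_zero (h : x ⬝ᵥ v = 0) : transvection v x = x := by
  simp [h]

theorem transvection_of_dotProduct_eq_one (h : x ⬝ᵥ v = 1) : transvection v x = x + v := by
  simp [h]

variable [CharP R 2]

theorem add_dotProduct_add_self (x z : ι → R) : (x + z) ⬝ᵥ (x + z) = x ⬝ᵥ x + z ⬝ᵥ z := by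
  simp only [add_dotProduct, dotProduct_add, dotProduct_comm z x]
  linear_combination (x ⬝ᵥ z) * CharTwo.two_eq_zero (R := R)

theorem transvection_dotProduct_transvection (hv : v ⬝ᵥ v = 0) (a b : ι → R) :
    transvection v a ⬝ᵥ transvection v b = a ⬝ᵥ b := by
  simp only [transvection_apply, add_dotProduct, dotProduct_add, smul_dotProduct, dotProduct_smul,
    smul_eq_mul, hv, dotProduct_comm v b]
  linear_combination (a ⬝ᵥ v) * (b ⬝ᵥ v) * CharTwo.two_eq_zero (R := R)

theorem transvection_involutive (hv : v ⬝ᵥ v = 0) : Function.Involutive (transvection v) := by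
  intro x
  simp only [transvection_apply, add_dotProduct, smul_dotProduct, smul_eq_mul, hv, mul_zero,
    add_zero, add_assoc, ← add_smul, CharTwo.add_self_eq_zero, zero_smul]

theorem transvection_add_apply_left {z : ι → R} (hxx : x ⬝ᵥ x = 0) (hxz : x ⬝ᵥ z = 1) :
    transvection (x + z) x = z := by
  have hx : x + x = 0 := by rw [← two_smul R x, CharTwo.two_eq_zero, zero_smul]
  rw [transvection_of_dotProduct_eq_one (by rw [dotProduct_add, hxx, hxz, zero_add]), ← add_assoc,
    hx, zero_add]

def transvectionEquiv (v : ι → R) (hv : v ⬝ᵥ v = 0) : (ι → R) ≃ₗ[R] (ι → R) :=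
  LinearEquiv.ofInvolutive (transvection v) (transvection_involutive hv)

@[simp]
theorem transvectionEquiv_apply (hv : v ⬝ᵥ v = 0) (x : ι → R) :
    transvectionEquiv v hv x = transvection v x := rfl

end Transvection

section BinaryVectors

theorem ZMod.eq_zero_of_ne_one_of_two {t : ZMod 2} (h : t ≠ 1) : t = 0 := by
  revert t
  decide

variable {ι : Type*} [Fintype ι] {x y : ι → ZMod 2}

theorem dotProduct_self_eq_dotProduct_one (x : ι → ZMod 2) : x ⬝ᵥ x = x ⬝ᵥ 1 := by
  have h : ∀ a : ZMod 2, a * a = a * 1 := by decide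
  simp only [dotProduct, Pi.one_apply, h]

theorem exists_isotropic_dotProduct_eq_one (hx0 : x ≠ 0) (hx1 : x ≠ 1) :
    ∃ a : ι → ZMod 2, a ⬝ᵥ a = 0 ∧ x ⬝ᵥ a = 1 := by
  classical
  obtain ⟨i, hi⟩ := Function.ne_iff.mp hx0
  obtain ⟨j, hj⟩ := Function.ne_iff.mp hx1
  have hxi : x i = 1 := Fin.eq_one_of_ne_zero _ hi
  have hxj : x j = 0 := ZMod.eq_zero_of_ne_one_of_two hj
  refine ⟨Pi.single i 1 + Pi.single j 1, ?_, ?_⟩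
  · rw [dotProduct_self_eq_dotProduct_one, add_dotProduct, single_dotProduct, single_dotProduct]
    simp only [Pi.one_apply, mul_one, CharTwo.add_self_eq_zero]
  · simp [dotProduct_single, hxi, hxj]

theorem exists_isotropic_dotProduct_eq_one_and_eq_one (hx0 : x ≠ 0) (hx1 : x ≠ 1) (hy0 : y ≠ 0)
    (hy1 : y ≠ 1) : ∃ z : ι → ZMod 2, z ⬝ᵥ z = 0 ∧ x ⬝ᵥ z = 1 ∧ y ⬝ᵥ z = 1 := by
  obtain ⟨a, haa, hxa⟩ := exists_isotropic_dotProduct_eq_one hx0 hx1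
  obtain ⟨b, hbb, hyb⟩ := exists_isotropic_dotProduct_eq_one hy0 hy1
  by_cases hya : y ⬝ᵥ a = 1
  · exact ⟨a, haa, hxa, hya⟩
  by_cases hxb : x ⬝ᵥ b = 1
  · exact ⟨b, hbb, hxb, hyb⟩
  refine ⟨a + b, ?_, ?_, ?_⟩
  · rw [add_dotProduct_add_self, haa, hbb, add_zero]
  · rw [dotProduct_add, hxa, ZMod.eq_zero_of_ne_one_of_two hxb, add_zero]
  · rw [dotProduct_add, hyb, ZMod.eq_zero_of_ne_one_of_two hya, zero_add]

end BinaryVectors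

theorem exists_isometry_fixing_one_apply_eq {ι : Type*} [Fintype ι] {x y : ι → ZMod 2}
    (hxx : x ⬝ᵥ x = 0) (hyy : y ⬝ᵥ y = 0) (hx0 : x ≠ 0) (hx1 : x ≠ 1) (hy0 : y ≠ 0)
    (hy1 : y ≠ 1) : ∃ g : (ι → ZMod 2) ≃ₗ[ZMod 2] (ι → ZMod 2),
      (∀ a b, g a ⬝ᵥ g b = a ⬝ᵥ b) ∧ g 1 = 1 ∧ g x = y := by
  obtain ⟨z, hzz, hxz, hyz⟩ := exists_isotropic_dotProduct_eq_one_and_eq_one hx0 hx1 hy0 hy1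
  have hzy : z ⬝ᵥ y = 1 := by rw [dotProduct_comm, hyz]
  have hu : (x + z) ⬝ᵥ (x + z) = 0 := by rw [add_dotProduct_add_self, hxx, hzz, add_zero]
  have hw : (z + y) ⬝ᵥ (z + y) = 0 := by rw [add_dotProduct_add_self, hzz, hyy, add_zero]
  -- over `ZMod 2`, `1 ⬝ᵥ v = v ⬝ᵥ v`, so both transvections fix `1`
  have fix_one {v : ι → ZMod 2} (hv : v ⬝ᵥ v = 0) : transvection v 1 = 1 := by
    rw [transvection_of_dotProduct_eq_zero]
    rwa [dotProduct_comm, ← dotProduct_self_eq_dotProduct_one]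
  refine ⟨(transvectionEquiv (x + z) hu).trans (transvectionEquiv (z + y) hw), ?_, ?_, ?_⟩
  · intro a b
    simp only [LinearEquiv.trans_apply, transvectionEquiv_apply,
      transvection_dotProduct_transvection hu, transvection_dotProduct_transvection hw]
  · simp only [LinearEquiv.trans_apply, transvectionEquiv_apply, fix_one hu, fix_one hw]
  · simp only [LinearEquiv.trans_apply, transvectionEquiv_apply,
      transvection_add_apply_left hxx hxz, transvection_add_apply_left hzz hzy]

theorem dotp_eq_dotProduct {d n : ℕ} (x y : Fin n → ZMod d) : dotp x y = x ⬝ᵥ y := rfl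

theorem dualSet_image {d n : ℕ} (g : (Fin n → ZMod d) ≃ₗ[ZMod d] (Fin n → ZMod d))
    (hg : ∀ a b, g a ⬝ᵥ g b = a ⬝ᵥ b) (S : Set (Fin n → ZMod d)) :
    dualSet (g '' S) = g '' dualSet S := by
  ext y
  obtain ⟨y, rfl⟩ := g.surjective y
  simp only [g.injective.mem_set_image, dualSet, Set.mem_ofPred_eq, Set.forall_mem_image,
    dotp_eq_dotProduct, hg]

theorem map_mem_asetX2_iff {n κ : ℕ} (g : (Fin n → ZMod 2) ≃ₗ[ZMod 2] (Fin n → ZMod 2))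
    (hg : ∀ a b, g a ⬝ᵥ g b = a ⬝ᵥ b) (hg1 : g 1 = 1) (x : Fin n → ZMod 2)
    (C : Submodule (ZMod 2) (Fin n → ZMod 2)) :
    C.map (g : (Fin n → ZMod 2) →ₗ[ZMod 2] (Fin n → ZMod 2)) ∈ AsetX2 n κ (g x) ↔
      C ∈ AsetX2 n κ x := by
  have one_mem : (fun _ => (1 : ZMod 2)) ∈ g '' C ↔
      (fun _ => (1 : ZMod 2)) ∈ (C : Set (Fin n → ZMod 2)) := by
    rw [← g.injective.mem_set_image (s := (C : Set _)), ← Pi.one_def, hg1]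
  simp only [AsetX2, Aset2, Set.mem_ofPred_eq, ← SetLike.mem_coe, Submodule.map_coe,
    LinearEquiv.coe_coe, one_mem, dualSet_image g hg, Set.image_subset_image_iff g.injective,
    g.injective.mem_set_image, LinearEquiv.finrank_map_eq]

theorem ncard_asetX2_apply {n κ : ℕ} (g : (Fin n → ZMod 2) ≃ₗ[ZMod 2] (Fin n → ZMod 2))
    (hg : ∀ a b, g a ⬝ᵥ g b = a ⬝ᵥ b) (hg1 : g 1 = 1) (x : Fin n → ZMod 2) :
    (AsetX2 n κ (g x)).ncard = (AsetX2 n κ x).ncard := by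
  have preimage_eq : Submodule.map (g : (Fin n → ZMod 2) →ₗ[ZMod 2] (Fin n → ZMod 2)) ⁻¹'
      AsetX2 n κ (g x) = AsetX2 n κ x :=
    Set.ext (map_mem_asetX2_iff g hg hg1 x)
  rw [← preimage_eq, Set.ncard_preimage_of_injective_subset_range
    (Submodule.map_injective_of_injective g.injective)
    (fun C _ => (Submodule.orderIsoMapComap g).surjective C)]

end CalderbankShor

open CalderbankShor in
theorem stmt_10_general (n κ : ℕ)
    (x y : Fin n → ZMod 2)
    (hxx : dotp x x = 0) (hyy : dotp y y = 0)
    (hx0 : x ≠ 0) (hx1 : x ≠ fun _ => (1 : ZMod 2))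
    (hy0 : y ≠ 0) (hy1 : y ≠ fun _ => (1 : ZMod 2)) :
    (AsetX2 n κ x).ncard = (AsetX2 n κ y).ncard := by
  obtain ⟨g, hg, hg1, rfl⟩ := exists_isometry_fixing_one_apply_eq hxx hyy hx0 hx1 hy0 hy1
  exact (ncard_asetX2_apply g hg hg1 x).symm

theorem stmt_10 (n κ : ℕ) (hn : 2 ≤ n) (hne : Even n) (hκ0 : 0 < κ) (hκ : 2 * κ ≤ n)
    (x y : Fin n → ZMod 2)
    (hxx : dotp x x = 0) (hyy : dotp y y = 0)
    (hx0 : x ≠ 0) (hx1 : x ≠ fun _ => (1 : ZMod 2))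
    (hy0 : y ≠ 0) (hy1 : y ≠ fun _ => (1 : ZMod 2)) :
    (AsetX2 n κ x).ncard = (AsetX2 n κ y).ncard :=
  stmt_10_general n κ x y hxx hyy hx0 hx1 hy0 hy1

end
end

section
/- Let F = ℤ/2ℤ, let n ≥ 2 be an even integer and 0 < κ ≤ n/2 an integer. Let A = {C ⊆ F^n : C is a linear subspace, 1^n ∈ C, C ⊆ C^⊥, dim_F C = κ}, and for x ∈ F^n let A_x = {C ∈ A : x ∈ C^⊥}. Then for every x ∈ F^n with x ∉ {0^n, 1^n}, |A_x| ≤ 2^{−κ+1}·|A|, while trivially |A_x| ≤ |A| when x ∈ {0^n, 1^n}. -/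
/- STATEMENT 11 (binary corollary): |A_x| ≤ 2^{−κ+1}·|A| for x ∉ {0ⁿ,1ⁿ},
   and trivially |A_x| ≤ |A| for x ∈ {0ⁿ,1ⁿ}. -/

open scoped BigOperators

noncomputable section

section Aux

open Module Finset

abbrev Vn (n : ℕ) := Fin n → ZMod 2

variable {n : ℕ}

private lemma zmod2_cases (a : ZMod 2) : a = 0 ∨ a = 1 := by revert a; decide

private lemma add_self_zmod2 (a : ZMod 2) : a + a = 0 := by revert a; decide

private lemma vadd_self (v : Vn n) : v + v = 0 :=
  funext fun i => add_self_zmod2 (v i)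

private lemma dotp_comm (x y : Vn n) : dotp x y = dotp y x := by
  unfold dotp; exact Finset.sum_congr rfl fun i _ => mul_comm _ _

private lemma dotp_add_left (x y z : Vn n) : dotp (x + y) z = dotp x z + dotp y z := by
  unfold dotp; rw [← Finset.sum_add_distrib]
  exact Finset.sum_congr rfl fun i _ => by simp [add_mul]

private lemma dotp_smul_left (c : ZMod 2) (x z : Vn n) : dotp (c • x) z = c * dotp x z := by
  unfold dotp; rw [Finset.mul_sum]
  exact Finset.sum_congr rfl fun i _ => by simp [mul_assoc]

private lemma dotp_add_right (x y z : Vn n) : dotp x (y + z) = dotp x y + dotp x z := by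
  rw [dotp_comm, dotp_add_left, dotp_comm y x, dotp_comm z x]

private lemma dotp_smul_right (c : ZMod 2) (x z : Vn n) : dotp x (c • z) = c * dotp x z := by
  rw [dotp_comm, dotp_smul_left, dotp_comm z x]

/-- The dot product as a bilinear form. -/
private def bf (n : ℕ) : LinearMap.BilinForm (ZMod 2) (Vn n) :=
  LinearMap.mk₂ (ZMod 2) dotp dotp_add_left dotp_smul_left dotp_add_right dotp_smul_right

private lemma bf_apply (x y : Vn n) : bf n x y = dotp x y := rfl

private lemma dotp_single (x : Vn n) (i : Fin n) : dotp x (Pi.single i 1) = x i := by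
  unfold dotp
  simp [Pi.single_apply, mul_ite, Finset.sum_ite_eq]

private lemma dotp_nondeg {w : Vn n} (h : ∀ z, dotp w z = 0) : w = 0 :=
  funext fun i => by simpa [dotp_single] using h (Pi.single i 1)

private lemma bf_symm : (bf n).IsSymm := ⟨fun x y => dotp_comm x y⟩

private lemma bf_refl : (bf n).IsRefl := bf_symm.isRefl

private lemma bf_nondeg : (bf n).Nondegenerate :=
  ⟨fun w h => dotp_nondeg h, fun w h => dotp_nondeg fun z => (dotp_comm w z).trans (h z)⟩

private lemma dotp_self_eq (x : Vn n) : dotp x x = dotp x (fun _ => 1) := by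
  unfold dotp
  exact Finset.sum_congr rfl fun i _ => by
    rcases zmod2_cases (x i) with h | h <;> simp [h]

private lemma mem_dualSet {s : Set (Vn n)} {y : Vn n} :
    y ∈ dualSet s ↔ ∀ x ∈ s, dotp x y = 0 := Iff.rfl

private lemma dualSet_eq_orthogonal (C : Submodule (ZMod 2) (Vn n)) :
    dualSet (C : Set (Vn n)) = ((bf n).orthogonal C : Set (Vn n)) := by
  ext y
  simp only [mem_dualSet, SetLike.mem_coe, LinearMap.BilinForm.mem_orthogonal_iff]
  rfl

/-! ### Transvections -/

private def tv (u : Vn n) : Vn n →ₗ[ZMod 2] Vn n :=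
  LinearMap.id + ((bf n) u).smulRight u

private lemma tv_apply (u v : Vn n) : tv u v = v + dotp u v • u := rfl

private lemma tv_invol {u : Vn n} (hu : dotp u u = 0) : Function.Involutive (tv u) := by
  intro v
  rw [tv_apply, tv_apply, dotp_add_right, dotp_smul_right, hu, mul_zero, add_zero,
    add_assoc, ← add_smul, add_self_zmod2, zero_smul, add_zero]

private lemma tv_dotp {u : Vn n} (hu : dotp u u = 0) (v w : Vn n) :
    dotp (tv u v) (tv u w) = dotp v w := by
  rw [tv_apply, tv_apply, dotp_add_left, dotp_add_right, dotp_add_right, dotp_smul_left,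
    dotp_smul_left, dotp_smul_right, dotp_smul_right, hu, dotp_comm v u]
  generalize dotp v w = A
  generalize dotp u v = B
  generalize dotp u w = C
  revert A B C; decide

private lemma tv_one {u : Vn n} (hu : dotp u (fun _ => 1) = 0) :
    tv u (fun _ => 1) = (fun _ => (1 : ZMod 2)) := by
  rw [tv_apply, hu, zero_smul, add_zero]

private def tve (u : Vn n) (hu : dotp u u = 0) : Vn n ≃ₗ[ZMod 2] Vn n :=
  LinearEquiv.ofInvolutive (tv u) (tv_invol hu)

private lemma tve_apply (u : Vn n) (hu : dotp u u = 0) (v : Vn n) : tve u hu v = tv u v := rfl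

/-! ### Symmetry of `AsetX2` -/

private lemma map_mem_Aset2 {κ : ℕ} (g : Vn n ≃ₗ[ZMod 2] Vn n)
    (hg : ∀ v w, dotp (g v) (g w) = dotp v w) (hg1 : g (fun _ => 1) = (fun _ => 1))
    {C : Submodule (ZMod 2) (Vn n)} (hC : C ∈ Aset2 n κ) :
    C.map (g : Vn n →ₗ[ZMod 2] Vn n) ∈ Aset2 n κ := by
  obtain ⟨h1, hso, hrk⟩ := hC
  refine ⟨Submodule.mem_map.mpr ⟨_, h1, hg1⟩, ?_, ?_⟩
  · intro b hb a ha
    rcases Submodule.mem_map.mp ha with ⟨ca, hca, rfl⟩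
    rcases Submodule.mem_map.mp hb with ⟨cb, hcb, rfl⟩
    simp only [LinearEquiv.coe_coe]
    rw [hg]
    exact hso hcb ca hca
  · rw [LinearEquiv.finrank_map_eq]; exact hrk

private lemma map_mem_AsetX2 {κ : ℕ} {x : Vn n} (g : Vn n ≃ₗ[ZMod 2] Vn n)
    (hg : ∀ v w, dotp (g v) (g w) = dotp v w) (hg1 : g (fun _ => 1) = (fun _ => 1))
    {C : Submodule (ZMod 2) (Vn n)} (hC : C ∈ AsetX2 n κ x) :
    C.map (g : Vn n →ₗ[ZMod 2] Vn n) ∈ AsetX2 n κ (g x) := by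
  refine ⟨map_mem_Aset2 g hg hg1 hC.1, ?_⟩
  intro a ha
  rcases Submodule.mem_map.mp ha with ⟨ca, hca, rfl⟩
  simp only [LinearEquiv.coe_coe]
  rw [hg]
  exact hC.2 ca hca

private lemma ncard_AsetX2_map {κ : ℕ} (g : Vn n ≃ₗ[ZMod 2] Vn n)
    (hg : ∀ v w, dotp (g v) (g w) = dotp v w) (hg1 : g (fun _ => 1) = (fun _ => 1))
    (x : Vn n) : (AsetX2 n κ (g x)).ncard = (AsetX2 n κ x).ncard := by
  have hg' : ∀ v w, dotp (g.symm v) (g.symm w) = dotp v w := by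
    intro v w
    have := hg (g.symm v) (g.symm w)
    rw [g.apply_symm_apply, g.apply_symm_apply] at this
    exact this.symm
  have hg1' : g.symm (fun _ => 1) = (fun _ => 1) := by
    conv_lhs => rw [← hg1]
    rw [g.symm_apply_apply]
  have himg : AsetX2 n κ (g x) =
      (fun C => C.map (g : Vn n →ₗ[ZMod 2] Vn n)) '' AsetX2 n κ x := by
    ext C'
    constructor
    · intro hC'
      refine ⟨C'.map (g.symm : Vn n →ₗ[ZMod 2] Vn n), ?_, ?_⟩
      · have := map_mem_AsetX2 g.symm hg' hg1' hC'
        rwa [g.symm_apply_apply] at this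
      · exact (Submodule.map_symm_eq_iff g).mp rfl
    · rintro ⟨C, hC, rfl⟩
      exact map_mem_AsetX2 g hg hg1 hC
  rw [himg]
  exact Set.ncard_image_of_injective _ (Submodule.map_injective_of_injective g.injective)

private lemma exists_z (x y : Vn n) (hx0 : x ≠ 0) (hx1 : x ≠ fun _ => 1)
    (hy0 : y ≠ 0) (hy1 : y ≠ fun _ => 1) :
    ∃ z : Vn n, dotp z (fun _ => 1) = 0 ∧ dotp z x = 1 ∧ dotp z y = 1 := by
  classical
  by_contra hcon
  push_neg at hcon
  set one : Vn n := (fun _ => 1) with hone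
  set ψ : Vn n →ₗ[ZMod 2] (Fin 3 → ZMod 2) :=
    LinearMap.pi ![bf n one, bf n x, bf n y] with hψdef
  have hψ : ∀ z, ψ z = ![dotp one z, dotp x z, dotp y z] := by
    intro z; funext i
    fin_cases i <;> rfl
  have ht : ![0, 1, 1] ∉ LinearMap.range ψ := by
    rintro ⟨z, hz⟩
    rw [hψ] at hz
    have h0 := congrFun hz 0
    have h1 := congrFun hz 1
    have h2 := congrFun hz 2
    simp only [Matrix.cons_val_zero, Matrix.cons_val_one, Matrix.head_cons,
      Matrix.cons_val_two, Matrix.tail_cons] at h0 h1 h2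
    exact hcon z (by rw [dotp_comm]; exact h0) (by rw [dotp_comm]; exact h1)
      (by rw [dotp_comm]; exact h2)
  obtain ⟨f, hf0, hfbot⟩ := Submodule.exists_dual_map_eq_bot_of_notMem ht inferInstance
  have hz0 : ∀ z, f (ψ z) = 0 := by
    intro z
    have hm : f (ψ z) ∈ (LinearMap.range ψ).map f :=
      Submodule.mem_map_of_mem ⟨z, rfl⟩
    rwa [hfbot, Submodule.mem_bot] at hm
  obtain ⟨a, b, c, hfw⟩ : ∃ a b c : ZMod 2,
      ∀ w : Fin 3 → ZMod 2, f w = w 0 * a + w 1 * b + w 2 * c :=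
    ⟨f (fun j => if 0 = j then 1 else 0), f (fun j => if 1 = j then 1 else 0),
      f (fun j => if 2 = j then 1 else 0), fun w => by
      rw [LinearMap.pi_apply_eq_sum_univ f w, Fin.sum_univ_three]
      simp [smul_eq_mul]⟩
  have hw0 : a • one + b • x + c • y = 0 := by
    apply dotp_nondeg
    intro z
    have h := hz0 z
    rw [hfw, hψ] at h
    simp only [Matrix.cons_val_zero, Matrix.cons_val_one, Matrix.head_cons,
      Matrix.cons_val_two, Matrix.tail_cons] at h
    rw [dotp_add_left, dotp_add_left, dotp_smul_left, dotp_smul_left, dotp_smul_left]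
    linear_combination h
  have hbc : b + c = 1 := by
    rw [hfw] at hf0
    simp only [Matrix.cons_val_zero, Matrix.cons_val_one, Matrix.head_cons,
      Matrix.cons_val_two, Matrix.tail_cons, zero_mul, one_mul, zero_add] at hf0
    rcases zmod2_cases (b + c) with h' | h'
    · exact absurd h' hf0
    · exact h'
  have heq : ∀ (v : Vn n), one + v = 0 → v = one := by
    intro v hv
    have h2 : one + (one + v) = one + 0 := by rw [hv]
    rwa [← add_assoc, vadd_self, zero_add, add_zero] at h2
  rcases zmod2_cases b with rfl | rfl <;> rcases zmod2_cases c with rfl | rfl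
  · exact absurd hbc (by decide)
  · -- b = 0, c = 1 : y = a • one
    rw [zero_smul, add_zero, one_smul] at hw0
    rcases zmod2_cases a with rfl | rfl
    · rw [zero_smul, zero_add] at hw0
      exact hy0 hw0
    · rw [one_smul] at hw0
      exact hy1 (heq y hw0)
  · -- b = 1, c = 0 : x = a • one
    rw [zero_smul, add_zero, one_smul] at hw0
    rcases zmod2_cases a with rfl | rfl
    · rw [zero_smul, zero_add] at hw0
      exact hx0 hw0
    · rw [one_smul] at hw0
      exact hx1 (heq x hw0)
  · exact absurd hbc (by decide)

private lemma exists_g {x y : Vn n} (hxe : dotp x (fun _ => 1) = 0)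
    (hye : dotp y (fun _ => 1) = 0) (hx0 : x ≠ 0) (hx1 : x ≠ fun _ => 1)
    (hy0 : y ≠ 0) (hy1 : y ≠ fun _ => 1) :
    ∃ g : Vn n ≃ₗ[ZMod 2] Vn n, (∀ v w, dotp (g v) (g w) = dotp v w) ∧
      g (fun _ => 1) = (fun _ => 1) ∧ g x = y := by
  obtain ⟨z, hz1, hzx, hzy⟩ := exists_z x y hx0 hx1 hy0 hy1
  have h1e : dotp (x + z) (fun _ => 1) = 0 := by rw [dotp_add_left, hxe, hz1, add_zero]
  have h2e : dotp (z + y) (fun _ => 1) = 0 := by rw [dotp_add_left, hye, hz1, add_zero]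
  have h1s : dotp (x + z) (x + z) = 0 := by rw [dotp_self_eq]; exact h1e
  have h2s : dotp (z + y) (z + y) = 0 := by rw [dotp_self_eq]; exact h2e
  refine ⟨(tve (x + z) h1s).trans (tve (z + y) h2s), ?_, ?_, ?_⟩
  · intro v w
    simp only [LinearEquiv.trans_apply, tve_apply]
    rw [tv_dotp h2s, tv_dotp h1s]
  · simp only [LinearEquiv.trans_apply, tve_apply]
    rw [tv_one h1e, tv_one h2e]
  · simp only [LinearEquiv.trans_apply, tve_apply]
    have hd1 : dotp (x + z) x = 1 := by
      rw [dotp_add_left, dotp_self_eq, hxe, hzx, zero_add]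
    have hd2 : dotp (z + y) z = 1 := by
      rw [dotp_add_left, dotp_self_eq z, hz1, dotp_comm y z, hzy, zero_add]
    have hs1 : tv (x + z) x = z := by
      rw [tv_apply, hd1, one_smul, ← add_assoc, vadd_self, zero_add]
    have hs2 : tv (z + y) z = y := by
      rw [tv_apply, hd2, one_smul, ← add_assoc, vadd_self, zero_add]
    rw [hs1, hs2]

private lemma ncard_AsetX2_eq {κ : ℕ} {x y : Vn n} (hxe : dotp x (fun _ => 1) = 0)
    (hye : dotp y (fun _ => 1) = 0) (hx0 : x ≠ 0) (hx1 : x ≠ fun _ => 1)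
    (hy0 : y ≠ 0) (hy1 : y ≠ fun _ => 1) :
    (AsetX2 n κ x).ncard = (AsetX2 n κ y).ncard := by
  obtain ⟨g, hg, hg1, hgx⟩ := exists_g hxe hye hx0 hx1 hy0 hy1
  have h := ncard_AsetX2_map (κ := κ) g hg hg1 x
  rw [hgx] at h
  exact h.symm

private instance : Finite (Submodule (ZMod 2) (Vn n)) :=
  Finite.of_injective (fun C => (C : Set (Vn n))) SetLike.coe_injective

private lemma card_submodule (D : Submodule (ZMod 2) (Vn n)) :
    Nat.card D = 2 ^ finrank (ZMod 2) D := by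
  have : Fintype D := Fintype.ofFinite _
  rw [Nat.card_eq_fintype_card, card_eq_pow_finrank (K := ZMod 2) (V := D), ZMod.card]

private lemma card_filter_sub (D : Submodule (ZMod 2) (Vn n)) (hn0 : 0 < n)
    (h1 : (fun _ => (1 : ZMod 2)) ∈ D) [DecidablePred (· ∈ D)] :
    ((Finset.univ.filter (· ∈ D)) \ {0, fun _ => 1} : Finset (Vn n)).card
      = 2 ^ finrank (ZMod 2) D - 2 := by
  classical
  have hne : (0 : Vn n) ≠ (fun _ => 1) := by
    intro h
    have := congrFun h ⟨0, hn0⟩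
    simp at this
  have hsub : ({0, fun _ => 1} : Finset (Vn n)) ⊆ Finset.univ.filter (· ∈ D) := by
    intro v hv
    simp only [Finset.mem_insert, Finset.mem_singleton] at hv
    rcases hv with rfl | rfl
    · simp [D.zero_mem]
    · simp [h1]
  have e : (Finset.univ.filter (· ∈ D)).card = Nat.card D := by
    rw [← Fintype.card_subtype]
    exact Nat.card_eq_fintype_card.symm
  rw [Finset.card_sdiff_of_subset hsub, Finset.card_insert_of_notMem (by simpa using hne),
    Finset.card_singleton, e, card_submodule]

private lemma finrank_ker_even (hn0 : 0 < n) :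
    finrank (ZMod 2) (LinearMap.ker (bf n (fun _ => 1))) = n - 1 := by
  have hsurj : Function.Surjective (bf n (fun _ => 1)) := by
    intro a
    refine ⟨a • Pi.single ⟨0, hn0⟩ 1, ?_⟩
    rw [map_smul, smul_eq_mul, bf_apply, dotp_single, mul_one]
  have hr : LinearMap.range (bf n (fun _ => 1)) = ⊤ := LinearMap.range_eq_top.mpr hsurj
  have h := LinearMap.finrank_range_add_finrank_ker (bf n (fun _ => 1))
  rw [hr, finrank_top, Module.finrank_self, Module.finrank_fin_fun] at h
  omega

end Aux


set_option maxHeartbeats 1000000 in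
theorem stmt_11 (n κ : ℕ) (hn : 2 ≤ n) (hne : Even n) (hκ0 : 0 < κ) (hκ : 2 * κ ≤ n)
    (x : Fin n → ZMod 2) :
    ((x ≠ 0 ∧ x ≠ fun _ => (1 : ZMod 2)) →
      ((AsetX2 n κ x).ncard : ℝ) ≤ (2 : ℝ) ^ (-(κ : ℝ) + 1) * ((Aset2 n κ).ncard : ℝ)) ∧
    ((x = 0 ∨ x = fun _ => (1 : ZMod 2)) →
      (AsetX2 n κ x).ncard ≤ (Aset2 n κ).ncard) := by
  classical
  have hn0 : 0 < n := by omega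
  have htriv : (AsetX2 n κ x).ncard ≤ (Aset2 n κ).ncard :=
    Set.ncard_le_ncard (fun C hC => hC.1) (Set.toFinite _)
  refine ⟨?_, fun _ => htriv⟩
  rintro ⟨hx0, hx1⟩
  have hrpow_pos : (0 : ℝ) < (2 : ℝ) ^ (-(κ : ℝ) + 1) := Real.rpow_pos_of_pos (by norm_num) _
  by_cases hxe : dotp x (fun _ => 1) = 0
  swap
  · -- odd-weight case : A_x is empty
    have hempty : AsetX2 n κ x = ∅ := by
      ext C
      simp only [Set.mem_empty_iff_false, iff_false]
      rintro ⟨⟨h1C, -, -⟩, hdual⟩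
      exact hxe (by rw [dotp_comm]; exact hdual _ h1C)
    rw [hempty]
    simp only [Set.ncard_empty, Nat.cast_zero]
    positivity
  -- main case : x has even weight
  have hA : (Aset2 n κ).Finite := Set.toFinite _
  set A : Finset (Submodule (ZMod 2) (Vn n)) := hA.toFinset with hAdef
  set S : Finset (Vn n) :=
    (Finset.univ.filter (· ∈ LinearMap.ker (bf n (fun _ => 1)))) \ {0, fun _ => 1} with hS
  have hSmem : ∀ v : Vn n, v ∈ S ↔ (dotp v (fun _ => 1) = 0 ∧ v ≠ 0 ∧ v ≠ fun _ => 1) := by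
    intro v
    rw [hS]
    simp only [Finset.mem_sdiff, Finset.mem_filter, Finset.mem_univ, true_and,
      LinearMap.mem_ker, Finset.mem_insert, Finset.mem_singleton, not_or]
    rw [bf_apply, dotp_comm]
  have hxS : x ∈ S := (hSmem x).mpr ⟨hxe, hx0, hx1⟩
  have h1ker : (fun _ => (1 : ZMod 2)) ∈ LinearMap.ker (bf n (fun _ => 1)) := by
    rw [LinearMap.mem_ker, bf_apply]
    show ∑ _i : Fin n, (1 : ZMod 2) * 1 = 0
    simp only [mul_one, Finset.sum_const, Finset.card_univ, Fintype.card_fin, nsmul_eq_mul,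
      mul_one]
    exact (ZMod.natCast_eq_zero_iff n 2).mpr hne.two_dvd
  have hScard : S.card = 2 ^ (n - 1) - 2 := by
    rw [hS, card_filter_sub _ hn0 h1ker, finrank_ker_even hn0]
  -- double counting
  have hsum : ∑ v ∈ S, (A.filter fun C : Submodule (ZMod 2) (Vn n) => v ∈ dualSet (C : Set (Vn n))).card
      = ∑ C ∈ A, (S.filter fun v => v ∈ dualSet (C : Set (Vn n))).card := by
    calc ∑ v ∈ S, (A.filter fun C : Submodule (ZMod 2) (Vn n) => v ∈ dualSet (C : Set (Vn n))).card
        = ∑ v ∈ S, ∑ C ∈ A, (if v ∈ dualSet (C : Set (Vn n)) then 1 else 0) :=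
          Finset.sum_congr rfl fun v _ => by rw [Finset.card_filter]
      _ = ∑ C ∈ A, ∑ v ∈ S, (if v ∈ dualSet (C : Set (Vn n)) then 1 else 0) :=
          Finset.sum_comm
      _ = ∑ C ∈ A, (S.filter fun v => v ∈ dualSet (C : Set (Vn n))).card :=
          Finset.sum_congr rfl fun C _ => by rw [Finset.card_filter]
  have hterm1 : ∀ v : Vn n,
      (A.filter fun C : Submodule (ZMod 2) (Vn n) => v ∈ dualSet (C : Set (Vn n))).card = (AsetX2 n κ v).ncard := by
    intro v
    have hseteq : AsetX2 n κ v
        = ↑(A.filter fun C : Submodule (ZMod 2) (Vn n) => v ∈ dualSet (C : Set (Vn n))) := by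
      ext C
      simp only [Finset.mem_coe, Finset.mem_filter, hAdef, Set.Finite.mem_toFinset]
      exact ⟨fun h => ⟨h.1, h.2⟩, fun h => ⟨h.1, h.2⟩⟩
    rw [hseteq, Set.ncard_coe_finset]
  have hequi : ∀ v ∈ S, (AsetX2 n κ v).ncard = (AsetX2 n κ x).ncard := by
    intro v hv
    obtain ⟨hv1, hv2, hv3⟩ := (hSmem v).mp hv
    exact ncard_AsetX2_eq hv1 hxe hv2 hv3 hx0 hx1
  have hterm2 : ∀ C ∈ A,
      (S.filter fun v => v ∈ dualSet (C : Set (Vn n))).card = 2 ^ (n - κ) - 2 := by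
    intro C hC
    rw [hAdef, Set.Finite.mem_toFinset] at hC
    obtain ⟨h1C, hso, hrk⟩ := hC
    set D := (bf n).orthogonal C with hD
    have h1D : (fun _ => (1 : ZMod 2)) ∈ D := by
      intro v hv
      show bf n v (fun _ => 1) = 0
      rw [bf_apply, ← dotp_self_eq]
      exact hso hv v hv
    have hDsub : ∀ v, v ∈ D → dotp v (fun _ => 1) = 0 := by
      intro v hv
      rw [dotp_comm]
      exact hv _ h1C
    have hfe : S.filter (fun v => v ∈ dualSet (C : Set (Vn n)))
        = (Finset.univ.filter (· ∈ D)) \ {0, fun _ => 1} := by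
      ext v
      rw [Finset.mem_filter, hSmem, dualSet_eq_orthogonal]
      simp only [Finset.mem_sdiff, Finset.mem_filter, Finset.mem_univ, true_and,
        SetLike.mem_coe, Finset.mem_insert, Finset.mem_singleton, not_or, ← hD]
      constructor
      · rintro ⟨⟨-, h0, h1⟩, hD'⟩
        exact ⟨hD', h0, h1⟩
      · rintro ⟨hD', h0, h1⟩
        exact ⟨⟨hDsub v hD', h0, h1⟩, hD'⟩
    rw [hfe, card_filter_sub _ hn0 h1D]
    congr 1
    rw [hD, LinearMap.BilinForm.finrank_orthogonal bf_nondeg,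
      Module.finrank_fin_fun, hrk]
  -- put the two countings together
  have hmain : (AsetX2 n κ x).ncard * (2 ^ (n - 1) - 2)
      = (Aset2 n κ).ncard * (2 ^ (n - κ) - 2) := by
    have l1 : ∑ v ∈ S, (A.filter fun C : Submodule (ZMod 2) (Vn n) => v ∈ dualSet (C : Set (Vn n))).card
        = S.card * (AsetX2 n κ x).ncard := by
      rw [Finset.sum_congr rfl fun v hv => by rw [hterm1, hequi v hv]]
      rw [Finset.sum_const, smul_eq_mul]
    have l2 : ∑ C ∈ A, (S.filter fun v => v ∈ dualSet (C : Set (Vn n))).card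
        = A.card * (2 ^ (n - κ) - 2) := by
      rw [Finset.sum_congr rfl hterm2, Finset.sum_const, smul_eq_mul]
    have hAcard : A.card = (Aset2 n κ).ncard := (Set.ncard_eq_toFinset_card _ hA).symm
    rw [l1, l2, hAcard, hScard] at hsum
    rw [mul_comm] at hsum
    exact hsum
  -- numerical conclusion
  have hp2 : 0 < 2 ^ (n - 1) - 2 := by
    have := Finset.card_pos.mpr ⟨x, hxS⟩
    rwa [hScard] at this
  have h2n1 : 2 ≤ 2 ^ (n - 1) := by
    calc (2 : ℕ) = 2 ^ 1 := rfl
    _ ≤ 2 ^ (n - 1) := Nat.pow_le_pow_right (by norm_num) (by omega)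
  have h2nκ : 2 ≤ 2 ^ (n - κ) := by
    calc (2 : ℕ) = 2 ^ 1 := rfl
    _ ≤ 2 ^ (n - κ) := Nat.pow_le_pow_right (by norm_num) (by omega)
  have hreal : ((AsetX2 n κ x).ncard : ℝ) * ((2 : ℝ) ^ (n - 1) - 2)
      = ((Aset2 n κ).ncard : ℝ) * ((2 : ℝ) ^ (n - κ) - 2) := by
    have := congrArg (fun m : ℕ => (m : ℝ)) hmain
    push_cast [Nat.cast_sub h2n1, Nat.cast_sub h2nκ] at this
    convert this using 2 <;> norm_num
  have hppos : (0 : ℝ) < (2 : ℝ) ^ (n - 1) - 2 := by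
    have hcast : ((2 ^ (n - 1) - 2 : ℕ) : ℝ) = (2 : ℝ) ^ (n - 1) - 2 := by
      push_cast [Nat.cast_sub h2n1]
      norm_num
    rw [← hcast]
    exact_mod_cast hp2
  have ht : (2 : ℝ) ^ (-(κ : ℝ) + 1) = 2 / 2 ^ κ := by
    rw [Real.rpow_add (by norm_num), Real.rpow_one, Real.rpow_neg (by norm_num),
      Real.rpow_natCast]
    ring
  have hq : (2 : ℝ) ^ (n - κ) - 2 ≤ (2 : ℝ) ^ (-(κ : ℝ) + 1) * ((2 : ℝ) ^ (n - 1) - 2) := by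
    rw [ht, div_mul_eq_mul_div, le_div_iff₀ (by positivity)]
    have e1 : (2 : ℝ) ^ (n - κ) * 2 ^ κ = 2 ^ (n - 1) * 2 := by
      rw [← pow_add, ← pow_succ]
      congr 1
      omega
    have e2 : (2 : ℝ) ≤ 2 ^ κ := by
      calc (2 : ℝ) = 2 ^ 1 := (pow_one 2).symm
      _ ≤ 2 ^ κ := pow_le_pow_right₀ (by norm_num) hκ0
    nlinarith [e1, e2]
  have hfin : ((AsetX2 n κ x).ncard : ℝ) * ((2 : ℝ) ^ (n - 1) - 2)
      ≤ ((2 : ℝ) ^ (-(κ : ℝ) + 1) * ((Aset2 n κ).ncard : ℝ)) * ((2 : ℝ) ^ (n - 1) - 2) := by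
    rw [hreal]
    have hmul := mul_le_mul_of_nonneg_left hq (Nat.cast_nonneg (Aset2 n κ).ncard)
    nlinarith [hmul]
  exact le_of_mul_le_mul_right hfin hppos

end
end
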